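/- arXiv:1510.00626 — 4 statements merged into one kernel-verified Lean document; each statement's English description precedes it below -/
import Mathlib

section
/- Let Ω ⊆ ℝ^d be open, K ⊆ Ω compact, let (u_ε) and (v_ε) be moderate nets of smooth functions on Ω, and let (x_{0,ε}) be a net of points of K. Then the following are equivalent: (1) there exists a slow scale infinitesimal net (r_ε) of positive reals such that for every moderate net (x_ε) of points of Ω for which there is a negligible net (n_ε) with |x_ε − x_{0,ε}| ≤ r_ε + n_ε for small ε, the net (u_ε(x_ε) − v_ε(x_ε)) is negligible; (2) for every moderate net (x_ε) of points of Ω such that (x_ε − x_{0,ε}) is a fast scale infinitesimal, the net (u_ε(x_ε) − v_ε(x_ε)) is negligible; (3) for each integer m ≥ 1, sup over {x ∈ ℝ^d : |x − x_{0,ε}| ≤ ε^{1/m}} of |u_ε(x) − v_ε(x)| ≤ ε^m for small ε. -/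
open MeasureTheory Set Metric
open scoped RealInnerProductSpace

noncomputable section

/-- Euclidean space `ℝ^d`. -/
abbrev Eu (d : ℕ) : Type := EuclideanSpace ℝ (Fin d)

/-- A property of `ε` holds "for small ε", i.e. on some interval `(0, ε₀]`. -/
def SmallE (P : ℝ → Prop) : Prop :=
  ∃ ε₀ : ℝ, 0 < ε₀ ∧ ∀ ε : ℝ, 0 < ε → ε ≤ ε₀ → P ε

/-- A net in a normed space is moderate. -/
def ModNet {V : Type*} [NormedAddCommGroup V] (x : ℝ → V) : Prop :=
  ∃ N : ℕ, SmallE fun ε => ‖x ε‖ ≤ ε ^ (-(N : ℝ))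

/-- A net in a normed space is negligible. -/
def NegNet {V : Type*} [NormedAddCommGroup V] (x : ℝ → V) : Prop :=
  ∀ m : ℕ, SmallE fun ε => ‖x ε‖ ≤ ε ^ (m : ℝ)

/-- A fast scale infinitesimal net. -/
def FastInf {V : Type*} [NormedAddCommGroup V] (x : ℝ → V) : Prop :=
  ∃ a : ℝ, 0 < a ∧ SmallE fun ε => ‖x ε‖ ≤ ε ^ a

/-- A slow scale infinitesimal net of positive reals. -/
def SlowInfPos (r : ℝ → ℝ) : Prop :=
  (∀ ε : ℝ, 0 < ε → ε ≤ 1 → 0 < r ε) ∧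
    ∀ a : ℝ, 0 < a → SmallE fun ε => ε ^ a ≤ r ε ∧ r ε ≤ a

/-- A fast scale net. -/
def FastScale {V : Type*} [NormedAddCommGroup V] (x : ℝ → V) : Prop :=
  ∃ a : ℝ, 0 < a ∧ SmallE fun ε => ε ^ (-a) ≤ ‖x ε‖

/-- A slow scale net. -/
def SlowScale {V : Type*} [NormedAddCommGroup V] (x : ℝ → V) : Prop :=
  ∀ a : ℝ, 0 < a → SmallE fun ε => ‖x ε‖ ≤ ε ^ (-a)

/-- A slow scale net of positive reals. -/
def SlowScalePos (R : ℝ → ℝ) : Prop :=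
  (∀ ε : ℝ, 0 < ε → ε ≤ 1 → 0 < R ε) ∧
    ∀ a : ℝ, 0 < a → SmallE fun ε => R ε ≤ ε ^ (-a)

/-- First order partial derivative in the `i`-th coordinate direction. -/
def pd {d : ℕ} {F : Type*} [NormedAddCommGroup F] [NormedSpace ℝ F]
    (i : Fin d) (f : Eu d → F) : Eu d → F :=
  fun x => fderiv ℝ f x (EuclideanSpace.single i 1)

/-- Iterated partial derivative `∂^α` along a list of coordinate directions
(a multi-index `α`). -/
def pdL {d : ℕ} {F : Type*} [NormedAddCommGroup F] [NormedSpace ℝ F]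
    (L : List (Fin d)) (f : Eu d → F) : Eu d → F :=
  L.foldr pd f

/-- A moderate net of smooth functions on an open set `Ω`. -/
def SmoothModNetOn {d : ℕ} (Ω : Set (Eu d)) (u : ℝ → Eu d → ℂ) : Prop :=
  (∀ ε : ℝ, 0 < ε → ε ≤ 1 → ContDiffOn ℝ (⊤ : ℕ∞) (u ε) Ω) ∧
    ∀ K : Set (Eu d), IsCompact K → K ⊆ Ω → ∀ L : List (Fin d), ∃ N : ℕ,
      SmallE fun ε => ∀ x ∈ K, ‖pdL L (u ε) x‖ ≤ ε ^ (-(N : ℝ))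

/-- A moderate net of smooth functions with supports all contained in one
common compact subset of `Ω`. -/
def CptModNet {d : ℕ} (Ω : Set (Eu d)) (v : ℝ → Eu d → ℂ) : Prop :=
  (∀ ε : ℝ, 0 < ε → ε ≤ 1 → ContDiff ℝ (⊤ : ℕ∞) (v ε)) ∧
  (∃ K : Set (Eu d), IsCompact K ∧ K ⊆ Ω ∧
    ∀ ε : ℝ, 0 < ε → ε ≤ 1 → tsupport (v ε) ⊆ K) ∧
  (∀ L : List (Fin d), ∃ N : ℕ, SmallE fun ε =>
    ∀ x : Eu d, ‖pdL L (v ε) x‖ ≤ ε ^ (-(N : ℝ)))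

/-- The Fourier transform `∫ e^{-i x·ξ} w(x) dx`. -/
def FT {d : ℕ} (w : Eu d → ℂ) (ξ : Eu d) : ℂ :=
  ∫ x : Eu d, Complex.exp (-(Complex.I * ((⟪x, ξ⟫ : ℝ) : ℂ))) * w x

/-- The net `(u_ε)` is microlocally regular at the generalized point `(x₀, ξ₀)`. -/
def MicroReg {d : ℕ} (Ω : Set (Eu d)) (u : ℝ → Eu d → ℂ) (x₀ ξ₀ : ℝ → Eu d) : Prop :=
  ∃ v : ℝ → Eu d → ℂ, CptModNet Ω v ∧
    (∀ m : ℕ, 1 ≤ m → SmallE fun ε => ∀ x : Eu d,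
      ‖x - x₀ ε‖ ≤ ε ^ (1 / (m : ℝ)) → ‖u ε x - v ε x‖ ≤ ε ^ (m : ℝ)) ∧
    (∀ m : ℕ, 1 ≤ m → SmallE fun ε => ∀ ξ : Eu d,
      ε ^ (-(1 / (m : ℝ))) ≤ ‖ξ‖ → ‖‖ξ‖⁻¹ • ξ - ξ₀ ε‖ ≤ ε ^ (1 / (m : ℝ)) →
        ‖FT (v ε) ξ‖ ≤ ε ^ (m : ℝ))

/-- The "japanese bracket" `⟨ξ⟩ = (1+|ξ|²)^{1/2}`. -/
def jap {d : ℕ} (ξ : Eu d) : ℝ := Real.sqrt (1 + ‖ξ‖ ^ 2)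

/-- An S-moderate net of Schwartz functions. -/
def SModNet {d : ℕ} (v : ℝ → SchwartzMap (Eu d) ℂ) : Prop :=
  ∀ (L : List (Fin d)) (β : Fin d → ℕ), ∃ N : ℕ, SmallE fun ε =>
    ∀ x : Eu d, |∏ j, (x j) ^ (β j)| * ‖pdL L (⇑(v ε)) x‖ ≤ ε ^ (-(N : ℝ))

lemma pow_rpow_one_div_nat (t : ℝ) (ht : 0 ≤ t) {m : ℕ} (hm : m ≠ 0) :
    (t ^ m) ^ (1 / (m : ℝ)) = t := by
  have hmR : (m : ℝ) ≠ 0 := Nat.cast_ne_zero.2 hm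
  rw [← Real.rpow_natCast t m, ← Real.rpow_mul ht, mul_one_div_cancel hmR, Real.rpow_one]

lemma rpow_one_div_le {ε t : ℝ} {m : ℕ} (hm : m ≠ 0) (hε : 0 ≤ ε) (ht : 0 ≤ t)
    (h : ε ≤ t ^ m) : ε ^ (1 / (m : ℝ)) ≤ t := by
  have := Real.rpow_le_rpow hε h (by positivity : (0:ℝ) ≤ 1 / (m : ℝ))
  rwa [pow_rpow_one_div_nat t ht hm] at this

/-- Lemma 3.2: pointwise characterizations of local equality of two
moderate nets of smooth functions near a generalized point. -/
theorem stmt0 {d : ℕ} (Ω K : Set (Eu d)) (hΩ : IsOpen Ω) (hK : IsCompact K) (hKΩ : K ⊆ Ω)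
    (u v : ℝ → Eu d → ℂ) (hu : SmoothModNetOn Ω u) (hv : SmoothModNetOn Ω v)
    (x₀ : ℝ → Eu d) (hx₀ : ∀ ε : ℝ, 0 < ε → ε ≤ 1 → x₀ ε ∈ K) :
    [ -- (1) equality on a slow scale neighbourhood of x₀
      (∃ r : ℝ → ℝ, SlowInfPos r ∧ ∀ x : ℝ → Eu d, ModNet x →
        (∀ ε : ℝ, 0 < ε → ε ≤ 1 → x ε ∈ Ω) →
        (∃ n : ℝ → ℝ, NegNet n ∧ SmallE fun ε => ‖x ε - x₀ ε‖ ≤ r ε + n ε) →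
        NegNet fun ε => u ε (x ε) - v ε (x ε)),
      -- (2) equality at all points fast-scale close to x₀
      (∀ x : ℝ → Eu d, ModNet x → (∀ ε : ℝ, 0 < ε → ε ≤ 1 → x ε ∈ Ω) →
        FastInf (fun ε => x ε - x₀ ε) →
        NegNet fun ε => u ε (x ε) - v ε (x ε)),
      -- (3) sup estimate on balls of radius ε^{1/m}
      (∀ m : ℕ, 1 ≤ m → SmallE fun ε => ∀ x : Eu d,
        ‖x - x₀ ε‖ ≤ ε ^ (1 / (m : ℝ)) → ‖u ε x - v ε x‖ ≤ ε ^ (m : ℝ)) ].TFAE := by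
  classical
  tfae_have 1 → 2 := by
    rintro ⟨r, ⟨hrpos, hrslow⟩, hmain⟩ x hxmod hxΩ ⟨a, ha, ε₁, hε₁, hfa⟩
    refine hmain x hxmod hxΩ ⟨fun _ => 0, ?_, ?_⟩
    · intro m
      exact ⟨1, one_pos, fun ε hε _ => by
        simpa using Real.rpow_nonneg hε.le (m : ℝ)⟩
    · obtain ⟨ε₂, hε₂, hsl⟩ := hrslow a ha
      refine ⟨min ε₁ ε₂, lt_min hε₁ hε₂, fun ε hε hεle => ?_⟩
      have h1 := hfa ε hε (hεle.trans (min_le_left _ _))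
      have h2 := (hsl ε hε (hεle.trans (min_le_right _ _))).1
      simpa using h1.trans h2
  tfae_have 2 → 3 := by
    intro h2 m hm
    obtain ⟨δ, hδ, hδΩ⟩ := hK.exists_thickening_subset_open hΩ hKΩ
    obtain ⟨C, hC⟩ := isBounded_iff_forall_norm_le.1 hK.isBounded
    set t : ℝ := min (δ / 2) 1 with ht
    have htpos : 0 < t := lt_min (by linarith) one_pos
    have ht1 : t ≤ 1 := min_le_right _ _
    have hmne : m ≠ 0 := by omega
    set P : ℝ → Eu d → Prop := fun ε y =>
      ‖y - x₀ ε‖ ≤ ε ^ (1 / (m : ℝ)) ∧ y ∈ Ω ∧ ¬ ‖u ε y - v ε y‖ ≤ ε ^ (m : ℝ) with hP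
    set x : ℝ → Eu d := fun ε => if h : ∃ y, P ε y then h.choose else x₀ ε with hx
    have hx_spec : ∀ ε, (∃ y, P ε y) → P ε (x ε) := by
      intro ε h
      simp only [hx, dif_pos h]
      exact h.choose_spec
    have hdist : ∀ ε : ℝ, 0 < ε → ‖x ε - x₀ ε‖ ≤ ε ^ (1 / (m : ℝ)) := by
      intro ε hε
      by_cases h : ∃ y, P ε y
      · exact (hx_spec ε h).1
      · simp only [hx, dif_neg h, sub_self, norm_zero]
        positivity
    have hxΩ' : ∀ ε : ℝ, 0 < ε → ε ≤ 1 → x ε ∈ Ω := by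
      intro ε hε hε1
      by_cases h : ∃ y, P ε y
      · exact (hx_spec ε h).2.1
      · simp only [hx, dif_neg h]
        exact hKΩ (hx₀ ε hε hε1)
    have hxmod : ModNet x := by
      refine ⟨1, min 1 (1 / (max C 0 + 1)), lt_min one_pos (by positivity), fun ε hε hεle => ?_⟩
      have hε1 : ε ≤ 1 := hεle.trans (min_le_left _ _)
      have hC0 : ‖x₀ ε‖ ≤ max C 0 := le_trans (hC _ (hx₀ ε hε hε1)) (le_max_left _ _)
      have hr1 : ε ^ (1 / (m : ℝ)) ≤ 1 := Real.rpow_le_one hε.le hε1 (by positivity)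
      have hb : ‖x ε‖ ≤ max C 0 + 1 := by
        calc ‖x ε‖ ≤ ‖x₀ ε‖ + ‖x ε - x₀ ε‖ := by
              simpa using norm_add_le (x₀ ε) (x ε - x₀ ε)
          _ ≤ max C 0 + 1 := add_le_add hC0 ((hdist ε hε).trans hr1)
      have hinv : max C 0 + 1 ≤ ε⁻¹ := by
        rw [le_inv_comm₀ (by positivity) hε]
        exact le_trans hεle (by rw [min_le_iff]; right; rw [one_div])
      calc ‖x ε‖ ≤ ε⁻¹ := hb.trans hinv
        _ = ε ^ (-((1:ℕ) : ℝ)) := by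
            rw [Nat.cast_one, Real.rpow_neg_one]
    have hfast : FastInf (fun ε => x ε - x₀ ε) := by
      refine ⟨1 / (m : ℝ), by positivity, 1, one_pos, fun ε hε _ => hdist ε hε⟩
    obtain ⟨ε₁, hε₁, hneg⟩ := h2 x hxmod hxΩ' hfast m
    refine ⟨min ε₁ (t ^ m), lt_min hε₁ (by positivity), fun ε hε hεle y hy => ?_⟩
    by_contra hcon
    have hεt : ε ≤ t ^ m := hεle.trans (min_le_right _ _)
    have hε1 : ε ≤ 1 := hεt.trans (pow_le_one₀ htpos.le ht1)
    have hrt : ε ^ (1 / (m : ℝ)) ≤ t := rpow_one_div_le hmne hε.le htpos.le hεt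
    have hyΩ : y ∈ Ω := by
      apply hδΩ
      rw [mem_thickening_iff]
      refine ⟨x₀ ε, hx₀ ε hε hε1, ?_⟩
      calc dist y (x₀ ε) = ‖y - x₀ ε‖ := dist_eq_norm _ _
        _ ≤ t := hy.trans hrt
        _ ≤ δ / 2 := min_le_left _ _
        _ < δ := by linarith
    have hexy : ∃ z, P ε z := ⟨y, hy, hyΩ, hcon⟩
    exact (hx_spec ε hexy).2.2 (hneg ε hε (hεle.trans (min_le_left _ _)))
  tfae_have 3 → 1 := by
    intro h3
    have h3' : ∀ m : ℕ, ∃ c : ℝ, 0 < c ∧ (1 ≤ m → ∀ ε : ℝ, 0 < ε → ε ≤ c →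
        ∀ y : Eu d, ‖y - x₀ ε‖ ≤ ε ^ (1 / (m : ℝ)) → ‖u ε y - v ε y‖ ≤ ε ^ (m : ℝ)) := by
      intro m
      by_cases hm : 1 ≤ m
      · obtain ⟨c, hc, hPc⟩ := h3 m hm
        exact ⟨c, hc, fun _ => hPc⟩
      · exact ⟨1, one_pos, fun h => absurd h hm⟩
    choose e he hPe using h3'
    set g : ℕ → ℝ := fun m => min (e m) ((1 / (m : ℝ)) ^ m) with hg
    have hgpos : ∀ m, 1 ≤ m → 0 < g m := by
      intro m hm
      have : (0:ℝ) < m := by exact_mod_cast hm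
      exact lt_min (he m) (pow_pos (by positivity) m)
    set η : ℕ → ℝ := fun m => Nat.rec 1 (fun k ih => min ih (g (k + 1))) m with hη
    have hηsucc : ∀ k, η (k + 1) = min (η k) (g (k + 1)) := fun k => rfl
    have hηpos : ∀ m, 0 < η m := by
      intro m
      induction m with
      | zero => exact one_pos
      | succ k ih => exact lt_min ih (hgpos _ (Nat.succ_le_succ (Nat.zero_le _)))
    have hηanti : Antitone η := antitone_nat_of_succ_le fun k => by
      rw [hηsucc]; exact min_le_left _ _
    have hηle_g : ∀ m, 1 ≤ m → η m ≤ g m := by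
      intro m hm
      match m, hm with
      | (k+1), _ => rw [hηsucc]; exact min_le_right _ _
    have hηle_pow : ∀ m, 1 ≤ m → η m ≤ (1 / (m : ℝ)) ^ m :=
      fun m hm => (hηle_g m hm).trans (min_le_right _ _)
    have hηle_e : ∀ m, 1 ≤ m → η m ≤ e m :=
      fun m hm => (hηle_g m hm).trans (min_le_left _ _)
    have hηle_inv : ∀ m, 1 ≤ m → η m ≤ 1 / (m : ℝ) := by
      intro m hm
      have hmR : (1:ℝ) ≤ m := by exact_mod_cast hm
      have h1 : (1 / (m : ℝ)) ≤ 1 := by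
        rw [div_le_one (by linarith)]; exact hmR
      exact (hηle_pow m hm).trans (pow_le_of_le_one (by positivity) h1 (by omega))
    set mf : ℝ → ℕ := fun ε => max 2 (Nat.findGreatest (fun m => ε ≤ η m) ⌈1/ε⌉₊) with hmf
    have hF1 : ∀ M : ℕ, 1 ≤ M → ∀ ε : ℝ, 0 < ε → ε ≤ η M →
        M ≤ Nat.findGreatest (fun m => ε ≤ η m) ⌈1/ε⌉₊ := by
      intro M hM ε hε hεM
      apply Nat.le_findGreatest _ hεM
      have hMR : (0:ℝ) < M := by exact_mod_cast hM
      have h1 : ε ≤ 1 / (M : ℝ) := hεM.trans (hηle_inv M hM)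
      have h2 : (M : ℝ) ≤ 1 / ε := by
        rw [le_div_iff₀ hε]
        rw [le_div_iff₀ hMR] at h1
        linarith
      exact_mod_cast h2.trans (Nat.le_ceil _)
    have hmf2 : ∀ ε, 2 ≤ mf ε := fun ε => le_max_left _ _
    have hF1' : ∀ M : ℕ, 1 ≤ M → ∀ ε : ℝ, 0 < ε → ε ≤ η M → M ≤ mf ε :=
      fun M hM ε hε hεM => (hF1 M hM ε hε hεM).trans (le_max_right _ _)
    have hF2 : ∀ ε : ℝ, 0 < ε → ε ≤ η 2 → ε ≤ η (mf ε) := by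
      intro ε hε hε2
      have hfg := hF1 2 (by norm_num) ε hε hε2
      have hmeq : mf ε = Nat.findGreatest (fun m => ε ≤ η m) ⌈1/ε⌉₊ := max_eq_right hfg
      rw [hmeq]
      exact Nat.findGreatest_spec (P := fun m => ε ≤ η m)
        (hfg.trans (Nat.findGreatest_le (P := fun m => ε ≤ η m) _)) hε2
    -- the key bound : ε^(1/mf ε) ≤ 1/(mf ε)
    have hkey : ∀ ε : ℝ, 0 < ε → ε ≤ η 2 → ε ^ (1 / (mf ε : ℝ)) ≤ 1 / (mf ε : ℝ) := by
      intro ε hε hε2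
      have h1 : ε ≤ (1 / (mf ε : ℝ)) ^ (mf ε) :=
        (hF2 ε hε hε2).trans (hηle_pow _ (by have := hmf2 ε; omega))
      exact rpow_one_div_le (by have := hmf2 ε; omega) hε.le (by positivity) h1
    have hη2le1 : η 2 ≤ 1/2 := by
      have := hηle_inv 2 (by norm_num)
      norm_num at this ⊢
      linarith
    refine ⟨fun ε => ε ^ (2 / (mf ε : ℝ)), ⟨fun ε hε _ => Real.rpow_pos_of_pos hε _, ?_⟩, ?_⟩
    · -- slow scale infinitesimal
      intro a ha
      set M : ℕ := max 2 ⌈2 / a⌉₊ with hM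
      have hM2 : 2 ≤ M := le_max_left _ _
      have hMpos : (0:ℝ) < M := by
        have : (2:ℝ) ≤ M := by exact_mod_cast hM2
        linarith
      have h2Ma : 2 / (M : ℝ) ≤ a := by
        rw [div_le_iff₀ hMpos]
        have h1 : (2 / a : ℝ) ≤ M :=
          le_trans (Nat.le_ceil _) (by exact_mod_cast Nat.le_max_right 2 ⌈2/a⌉₊)
        rw [div_le_iff₀ ha] at h1
        linarith
      refine ⟨η M, hηpos M, fun ε hε hεM => ?_⟩
      have hεη2 : ε ≤ η 2 := hεM.trans (hηanti hM2)
      have hε1 : ε ≤ 1 := hεη2.trans (by linarith)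
      have hMmf : M ≤ mf ε := hF1' M (by omega) ε hε hεM
      have hmfpos : (0:ℝ) < mf ε := by
        have := hmf2 ε
        have : (2:ℝ) ≤ mf ε := by exact_mod_cast this
        linarith
      have hexp : 2 / (mf ε : ℝ) ≤ a := by
        refine le_trans ?_ h2Ma
        apply div_le_div_of_nonneg_left (by norm_num) hMpos
        exact_mod_cast hMmf
      constructor
      · exact Real.rpow_le_rpow_of_exponent_ge hε hε1 hexp
      · have h1 : ε ^ (2 / (mf ε : ℝ)) ≤ ε ^ (1 / (mf ε : ℝ)) := by
          apply Real.rpow_le_rpow_of_exponent_ge hε hε1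
          rw [div_le_div_iff₀ hmfpos hmfpos]
          linarith
        have h2 : (1 / (mf ε : ℝ)) ≤ 1 / (M : ℝ) := by
          apply div_le_div_of_nonneg_left (by norm_num) hMpos
          exact_mod_cast hMmf
        have h3 : (1 / (M : ℝ)) ≤ a := by
          refine le_trans ?_ h2Ma
          rw [div_le_div_iff₀ hMpos hMpos]
          linarith
        calc ε ^ (2 / (mf ε : ℝ)) ≤ ε ^ (1 / (mf ε : ℝ)) := h1
          _ ≤ 1 / (mf ε : ℝ) := hkey ε hε hεη2
          _ ≤ 1 / (M : ℝ) := h2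
          _ ≤ a := h3
    · -- main property
      rintro x hxmod hxΩ ⟨n, hn, ε₃, hε₃, hxn⟩ m
      set M : ℕ := max 2 m with hM
      have hM2 : 2 ≤ M := le_max_left _ _
      obtain ⟨ε₄, hε₄, hn1⟩ := hn 1
      refine ⟨min (η M) (min ε₃ (min ε₄ (1/4))),
        lt_min (hηpos M) (lt_min hε₃ (lt_min hε₄ (by norm_num))), fun ε hε hεle => ?_⟩
      have hεM : ε ≤ η M := hεle.trans (min_le_left _ _)
      have hεε₃ : ε ≤ ε₃ := hεle.trans ((min_le_right _ _).trans (min_le_left _ _))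
      have hεε₄ : ε ≤ ε₄ :=
        hεle.trans ((min_le_right _ _).trans ((min_le_right _ _).trans (min_le_left _ _)))
      have hεq : ε ≤ 1/4 :=
        hεle.trans ((min_le_right _ _).trans ((min_le_right _ _).trans (min_le_right _ _)))
      have hε1 : ε ≤ 1 := by linarith
      have hεη2 : ε ≤ η 2 := hεM.trans (hηanti hM2)
      set m' : ℕ := mf ε with hm'
      have hMm' : M ≤ m' := hF1' M (by omega) ε hε hεM
      have hm'2 : 2 ≤ m' := hmf2 ε
      have hm'1 : 1 ≤ m' := by omega
      have hm'pos : (0:ℝ) < m' := by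
        have : (2:ℝ) ≤ m' := by exact_mod_cast hm'2
        linarith
      have hεm' : ε ≤ η m' := hF2 ε hε hεη2
      have hhalf : ε ^ (1 / (m' : ℝ)) ≤ 1/2 := by
        refine (hkey ε hε hεη2).trans ?_
        rw [div_le_div_iff₀ hm'pos (by norm_num)]
        have : (2:ℝ) ≤ m' := by exact_mod_cast hm'2
        linarith
      have hrpos : (0:ℝ) ≤ ε ^ (1 / (m' : ℝ)) := (Real.rpow_pos_of_pos hε _).le
      -- r ε ≤ ε^(1/m') / 2
      have hA : ε ^ (2 / (m' : ℝ)) ≤ ε ^ (1 / (m' : ℝ)) * (1/2) := by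
        have h1 : (2 : ℝ) / (m' : ℝ) = 1 / (m' : ℝ) + 1 / (m' : ℝ) := by ring
        rw [h1, Real.rpow_add hε]
        exact mul_le_mul_of_nonneg_left hhalf hrpos
      -- n ε ≤ ε^(1/m') / 2
      have hnε : n ε ≤ ε := by
        have := hn1 ε hε hεε₄
        simp only [Real.norm_eq_abs, Nat.cast_one, Nat.cast_ofNat, Real.rpow_one] at this
        exact (le_abs_self _).trans this
      have hB : ε ≤ ε ^ (1 / (m' : ℝ)) * (1/2) := by
        have hsplit : ε = ε ^ (1 / (m' : ℝ)) * ε ^ (1 - 1 / (m' : ℝ)) := by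
          rw [← Real.rpow_add hε]
          norm_num
        have hfrac : 1 / (m' : ℝ) ≤ 1/2 := by
          rw [div_le_div_iff₀ hm'pos (by norm_num)]
          have : (2:ℝ) ≤ m' := by exact_mod_cast hm'2
          linarith
        have h2 : ε ^ (1 - 1 / (m' : ℝ)) ≤ ε ^ ((1:ℝ)/2) :=
          Real.rpow_le_rpow_of_exponent_ge hε hε1 (by linarith)
        have h3 : ε ^ ((1:ℝ)/2) ≤ 1/2 := by
          have h4 : ε ≤ (1/2 : ℝ) ^ (2:ℕ) := by norm_num; linarith
          have h5 := rpow_one_div_le (m := 2) two_ne_zero hε.le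
            (by norm_num : (0:ℝ) ≤ 1/2) h4
          have h6 : (1 / ((2:ℕ):ℝ)) = (1:ℝ)/2 := by norm_num
          rwa [h6] at h5
        calc ε = ε ^ (1 / (m' : ℝ)) * ε ^ (1 - 1 / (m' : ℝ)) := hsplit
          _ ≤ ε ^ (1 / (m' : ℝ)) * (1/2) :=
            mul_le_mul_of_nonneg_left (h2.trans h3) hrpos
      have hclose : ‖x ε - x₀ ε‖ ≤ ε ^ (1 / (m' : ℝ)) := by
        have := hxn ε hε hεε₃
        calc ‖x ε - x₀ ε‖ ≤ ε ^ (2 / (m' : ℝ)) + n ε := this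
          _ ≤ ε ^ (1 / (m' : ℝ)) * (1/2) + ε ^ (1 / (m' : ℝ)) * (1/2) :=
            add_le_add hA (hnε.trans hB)
          _ = ε ^ (1 / (m' : ℝ)) := by ring
      have hmain := hPe m' hm'1 ε hε (hεm'.trans (hηle_e m' hm'1)) (x ε) hclose
      refine hmain.trans ?_
      apply Real.rpow_le_rpow_of_exponent_ge hε hε1
      have : m ≤ m' := le_trans (le_max_right 2 m) hMm'
      exact_mod_cast this
  tfae_finish
end
end

section
/- Let (v_ε) be an S-moderate net of Schwartz functions on ℝ^d and let (ξ_{0,ε}) be a net of unit vectors in ℝ^d. Then the following are equivalent: (1) there exist a slow scale infinitesimal net (r_ε) of positive reals and a positive slow scale net (R_ε) such that for every moderate net (ξ_ε) of nonzero vectors for which there are negligible nets (n_ε), (n'_ε) with |ξ_ε/|ξ_ε| − ξ_{0,ε}| ≤ r_ε + n_ε and |ξ_ε| ≥ R_ε − n'_ε for small ε, the net (\hat v_ε(ξ_ε)) is negligible; (2) for every moderate fast scale net (ξ_ε) such that (ξ_ε/|ξ_ε| − ξ_{0,ε}) is a fast scale infinitesimal, the net (\hat v_ε(ξ_ε)) is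 negligible; (3) for each integer m ≥ 1, sup over {ξ : |ξ| ≥ ε^{−1/m} and |ξ/|ξ| − ξ_{0,ε}| ≤ ε^{1/m}} of |\hat v_ε(ξ)| ≤ ε^m for small ε; (4) there exists N ∈ ℕ such that for each integer m ≥ 1, sup over {ξ ≠ 0 : |ξ/|ξ| − ξ_{0,ε}| ≤ ε^{1/m}} of ⟨ξ⟩^m |\hat v_ε(ξ)| ≤ ε^{−N} for small ε. -/
open MeasureTheory Set Metric
open scoped RealInnerProductSpace

noncomputable section

/-!
S-moderateness bounds the `L¹` norms of all derivatives of `v ε` moderately; since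
`FT (∂ⱼ^k w) ξ = (i ξⱼ)^k FT w ξ` and `‖FT w‖ ≤ ‖w‖₁`, every `⟨ξ⟩^q ‖FT (v ε) ξ‖` is then
bounded by `ε ^ (-N_q)`, uniformly in `ξ`.

(4) ⇒ (3) since `⟨ξ⟩ ≥ ε ^ (-1/m)` on the truncated cone. (3) ⇒ (4): far out, interpolate the
decay of order `2m` with the smallness of order `m + N`; near the origin `⟨ξ⟩^m ≤ 2^m ε⁻¹`.
(2) ⇒ (3): the points where (3) fails lie below `ε ^ (-(N + m))` by the decay, so choosing one
for every `ε` gives a moderate fast scale net in fast scale directions. (3) ⇒ (1): pick the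
level `m = κ ε` of (3) diagonally with `κ ε → ∞`, and take `r = ε ^ (1/κ)/2`, `R = 2 ε ^ (-1/κ)`.
(1) ⇒ (2): fast scale bounds dominate slow scale ones.
-/

open Filter Topology
open scoped FourierTransform LineDeriv SchwartzMap

theorem smallE_iff_eventually {P : ℝ → Prop} : SmallE P ↔ ∀ᶠ ε in 𝓝[>] 0, P ε := by
  rw [(nhdsGT_basis_Ioc (0 : ℝ)).eventually_iff]
  exact exists_congr fun _ => and_congr_right'
    ⟨fun h ε hε => h ε hε.1 hε.2, fun h ε h₀ h₁ => h ⟨h₀, h₁⟩⟩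

theorem eventually_rpow_le {a c : ℝ} (ha : 0 < a) (hc : 0 < c) :
    ∀ᶠ ε in 𝓝[>] 0, ε ^ a ≤ c := by
  have h : Tendsto (fun ε : ℝ => ε ^ a) (𝓝 0) (𝓝 0) := by
    simpa [Real.zero_rpow ha.ne'] using (Real.continuous_rpow_const ha.le).tendsto 0
  exact (h.mono_left nhdsWithin_le_nhds).eventually (Iic_mem_nhds hc)

theorem eventually_le_rpow_neg {a : ℝ} (ha : 0 < a) (c : ℝ) :
    ∀ᶠ ε in 𝓝[>] 0, c ≤ ε ^ (-a) :=
  (tendsto_rpow_neg_nhdsGT_zero (neg_neg_of_pos ha)).eventually_ge_atTop c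

theorem rpow_neg_natCast_le_rpow_neg_natCast {ε : ℝ} (hε : 0 < ε) (hε₁ : ε ≤ 1) {N M : ℕ}
    (h : N ≤ M) : ε ^ (-(N : ℝ)) ≤ ε ^ (-(M : ℝ)) :=
  Real.rpow_le_rpow_of_exponent_ge hε hε₁ (neg_le_neg (Nat.cast_le.2 h))

theorem le_rpow_sub_of_rpow_neg_mul_le {ε a b y : ℝ} (hε : 0 < ε)
    (h : ε ^ (-a) * y ≤ ε ^ (-b)) : y ≤ ε ^ (a - b) := by
  rwa [← le_div_iff₀' (Real.rpow_pos_of_pos hε _), ← Real.rpow_sub hε, neg_sub_neg] at h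

theorem negNet_zero {V : Type*} [NormedAddCommGroup V] : NegNet fun _ : ℝ => (0 : V) :=
  fun _ => smallE_iff_eventually.2 <| eventually_mem_nhdsWithin.mono fun ε hε => by
    simp only [norm_zero]
    exact Real.rpow_nonneg (le_of_lt hε) _

theorem NegNet.congr {V : Type*} [NormedAddCommGroup V] {x y : ℝ → V} (hx : NegNet x)
    (h : x =ᶠ[𝓝[>] 0] y) : NegNet y := fun m => by
  rw [smallE_iff_eventually]
  filter_upwards [smallE_iff_eventually.1 (hx m), h] with ε hε hxy
  rwa [← hxy]

theorem ModNet.congr {V : Type*} [NormedAddCommGroup V] {x y : ℝ → V} (hx : ModNet x)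
    (h : x =ᶠ[𝓝[>] 0] y) : ModNet y := by
  obtain ⟨N, hN⟩ := hx
  refine ⟨N, smallE_iff_eventually.2 ?_⟩
  filter_upwards [smallE_iff_eventually.1 hN, h] with ε hε hxy
  rwa [← hxy]

/-- Select a counterexample at every index where there is one. -/
theorem eventually_forall_of_forall_selection {ι α : Type*} [Nonempty α] {l : Filter ι}
    {S P : ι → α → Prop} (hS : ∀ᶠ i in l, ∃ x, S i x)
    (h : ∀ ξ : ι → α, (∀ᶠ i in l, S i (ξ i)) → ∀ᶠ i in l, P i (ξ i)) :
    ∀ᶠ i in l, ∀ x, S i x → P i x := by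
  have hsel : ∀ i, ∃ x, (∃ y, S i y) → S i x ∧ ∀ y, S i y → P i x → P i y := by
    intro i
    by_cases hbad : ∃ y, S i y ∧ ¬ P i y
    · obtain ⟨y, hy, hPy⟩ := hbad
      exact ⟨y, fun _ => ⟨hy, fun _ _ hP => absurd hP hPy⟩⟩
    · push Not at hbad
      by_cases hne : ∃ y, S i y
      · obtain ⟨y, hy⟩ := hne
        exact ⟨y, fun _ => ⟨hy, fun z hz _ => hbad z hz⟩⟩
      · exact ⟨Classical.arbitrary α, fun h => absurd h hne⟩
  choose ξ hξ using hsel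
  filter_upwards [hS, h ξ (hS.mono fun i hi => (hξ i hi).1)] with i hi hP x hx
  exact (hξ i hi).2 x hx hP

theorem exists_tendsto_atTop_eventually_diag {P : ℕ → ℝ → Prop}
    (h : ∀ k, ∀ᶠ ε in 𝓝[>] 0, P k ε) :
    ∃ κ : ℝ → ℕ, Tendsto κ (𝓝[>] 0) atTop ∧ ∀ᶠ ε in 𝓝[>] 0, P (κ ε) ε := by
  classical
  choose t ht hP using fun k => (nhdsGT_basis_Ioc (0 : ℝ)).eventually_iff.1 (h k)
  -- `κ ε` is the last `k` with `ε ≤ δ k`; the cap `δ k ≤ 1 / (k + 1)` bounds the search.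
  set δ : ℕ → ℝ := fun k => min (t k) (1 / (k + 1))
  have hδ : ∀ k, 0 < δ k := fun k => lt_min (ht k) (by positivity)
  refine ⟨fun ε => Nat.findGreatest (fun k => ε ≤ δ k) ⌈ε⁻¹⌉₊, ?_, ?_⟩
  · refine tendsto_atTop.2 fun M => ?_
    filter_upwards [Ioc_mem_nhdsGT (hδ M)] with ε ⟨hε, hεM⟩
    refine Nat.le_findGreatest ?_ hεM
    have : (M : ℝ) + 1 ≤ ε⁻¹ := by
      rw [le_inv_comm₀ (by positivity) hε, ← one_div]
      exact hεM.trans (min_le_right _ _)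
    exact_mod_cast (show (M : ℝ) ≤ ε⁻¹ by linarith).trans (Nat.le_ceil _)
  · filter_upwards [Ioc_mem_nhdsGT (hδ 0)] with ε ⟨hε, hε₀⟩
    have hκ := Nat.findGreatest_spec (P := fun k => ε ≤ δ k) (Nat.zero_le ⌈ε⁻¹⌉₊) hε₀
    exact hP _ ⟨hε, hκ.trans (min_le_left _ _)⟩

def UnifModerate {α : Type*} (F : ℝ → α → ℝ) : Prop :=
  ∃ N : ℕ, ∀ᶠ ε in 𝓝[>] 0, ∀ a, F ε a ≤ ε ^ (-(N : ℝ))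

namespace UnifModerate

variable {α : Type*} {F G : ℝ → α → ℝ}

theorem of_le_mul_rpow (c : ℝ) (N : ℕ)
    (h : ∀ᶠ ε in 𝓝[>] 0, ∀ a, F ε a ≤ c * ε ^ (-(N : ℝ))) : UnifModerate F := by
  refine ⟨N + 1, ?_⟩
  filter_upwards [h, eventually_le_rpow_neg one_pos c, eventually_mem_nhdsWithin]
    with ε hF hc hε a
  calc F ε a ≤ c * ε ^ (-(N : ℝ)) := hF a
    _ ≤ ε ^ (-1 : ℝ) * ε ^ (-(N : ℝ)) :=
        mul_le_mul_of_nonneg_right hc (Real.rpow_nonneg (le_of_lt hε) _)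
    _ = ε ^ (-((N + 1 : ℕ) : ℝ)) := by
      rw [← Real.rpow_add hε]
      push_cast
      ring_nf

theorem mono (hG : UnifModerate G) (h : ∀ᶠ ε in 𝓝[>] 0, ∀ a, F ε a ≤ G ε a) :
    UnifModerate F := by
  obtain ⟨N, hN⟩ := hG
  exact ⟨N, by filter_upwards [hN, h] with ε hG hFG a using (hFG a).trans (hG a)⟩

theorem const_mul {c : ℝ} (hc : 0 ≤ c) (hF : UnifModerate F) :
    UnifModerate fun ε a => c * F ε a := by
  obtain ⟨N, hN⟩ := hF
  exact of_le_mul_rpow c N <| by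
    filter_upwards [hN] with ε hF a using mul_le_mul_of_nonneg_left (hF a) hc

theorem add (hF : UnifModerate F) (hG : UnifModerate G) :
    UnifModerate fun ε a => F ε a + G ε a := by
  obtain ⟨N, hN⟩ := hF
  obtain ⟨M, hM⟩ := hG
  refine of_le_mul_rpow 2 (max N M) ?_
  filter_upwards [hN, hM, Ioc_mem_nhdsGT one_pos] with ε hF hG ⟨hε, hε₁⟩ a
  have hN' := rpow_neg_natCast_le_rpow_neg_natCast hε hε₁ (le_max_left N M)
  have hM' := rpow_neg_natCast_le_rpow_neg_natCast hε hε₁ (le_max_right N M)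
  linarith [hF a, hG a]

theorem sum {ι : Type*} (s : Finset ι) {F : ι → ℝ → α → ℝ}
    (h : ∀ i ∈ s, UnifModerate (F i)) : UnifModerate fun ε a => ∑ i ∈ s, F i ε a := by
  classical
  induction s using Finset.induction_on with
  | empty =>
    exact ⟨0, eventually_mem_nhdsWithin.mono fun ε hε a => by simp⟩
  | insert i s hi ih =>
    simp only [Finset.sum_insert hi]
    exact (h i (Finset.mem_insert_self i s)).add
      (ih fun j hj => h j (Finset.mem_insert_of_mem hj))

end UnifModerate

section

variable {d : ℕ}

theorem one_le_jap (ξ : Eu d) : 1 ≤ jap ξ :=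
  Real.one_le_sqrt.2 (le_add_of_nonneg_right (by positivity))

theorem jap_pos (ξ : Eu d) : 0 < jap ξ :=
  zero_lt_one.trans_le (one_le_jap ξ)

theorem norm_le_jap (ξ : Eu d) : ‖ξ‖ ≤ jap ξ :=
  Real.le_sqrt_of_sq_le (le_add_of_nonneg_left zero_le_one)

theorem jap_le_one_add_norm (ξ : Eu d) : jap ξ ≤ 1 + ‖ξ‖ :=
  Real.sqrt_le_iff.2 ⟨by positivity, by nlinarith [norm_nonneg ξ]⟩

theorem jap_sq (ξ : Eu d) : jap ξ ^ 2 = 1 + ‖ξ‖ ^ 2 :=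
  Real.sq_sqrt (by positivity)

theorem jap_pow_le_of_norm_le {ε : ℝ} (hε : 0 < ε) (hε₁ : ε ≤ 1) {m : ℕ} (hm : m ≠ 0)
    {ξ : Eu d} (h : ‖ξ‖ ≤ ε ^ (-(1 / (m : ℝ)))) : jap ξ ^ m ≤ 2 ^ m * ε ^ (-1 : ℝ) := by
  have hone := Real.one_le_rpow_of_pos_of_le_one_of_nonpos hε hε₁
    (neg_nonpos.2 (by positivity) : -(1 / (m : ℝ)) ≤ 0)
  calc jap ξ ^ m ≤ (2 * ε ^ (-(1 / (m : ℝ)))) ^ m :=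
        pow_le_pow_left₀ (jap_pos ξ).le (by linarith [jap_le_one_add_norm ξ]) m
    _ = 2 ^ m * ε ^ (-1 : ℝ) := by
        rw [mul_pow, ← Real.rpow_natCast (ε ^ _), ← Real.rpow_mul hε.le]
        field_simp

theorem jap_pow_le (x : Eu d) (q : ℕ) :
    jap x ^ (2 * q) ≤ ((d : ℝ) + 1) ^ q * (1 + ∑ j, x j ^ (2 * q)) := by
  have hnorm : jap x ^ (2 * q) = (1 + ∑ j, x j ^ 2) ^ q := by
    simp [pow_mul, jap_sq, EuclideanSpace.norm_sq_eq]
  rw [hnorm]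
  rcases q with _ | n
  · simp
  -- Jensen for the `d + 1` numbers `1, x₁², …, x_d²`
  have h := pow_sum_le_card_mul_sum_pow (s := Finset.univ)
    (f := fun o : Option (Fin d) => o.elim 1 fun j => x j ^ 2)
    (fun o _ => by cases o <;> simp [sq_nonneg]) n
  simp only [Fintype.sum_option, Option.elim, one_pow, Finset.card_univ, Fintype.card_option,
    Fintype.card_fin, ← pow_mul] at h
  refine h.trans (mul_le_mul_of_nonneg_right ?_ (add_nonneg zero_le_one
    (Finset.sum_nonneg fun j _ => (even_two_mul _).pow_nonneg _)))
  push_cast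
  exact pow_le_pow_right₀ (by linarith [(d.cast_nonneg : (0 : ℝ) ≤ d)]) n.le_succ

theorem UnifModerate.jap_pow_mul {G : ℝ → Eu d → ℝ} (hG : ∀ ε x, 0 ≤ G ε x) (q : ℕ)
    (h₀ : UnifModerate G) (h : ∀ j, UnifModerate fun ε x => x j ^ (2 * q) * G ε x) :
    UnifModerate fun ε x => jap x ^ (2 * q) * G ε x := by
  refine ((h₀.add (UnifModerate.sum Finset.univ fun j _ => h j)).const_mul
    (c := ((d : ℝ) + 1) ^ q) (by positivity)).mono (Eventually.of_forall fun ε x => ?_)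
  calc jap x ^ (2 * q) * G ε x ≤ ((d : ℝ) + 1) ^ q * (1 + ∑ j, x j ^ (2 * q)) * G ε x :=
        mul_le_mul_of_nonneg_right (jap_pow_le x q) (hG ε x)
    _ = _ := by rw [mul_assoc, add_mul, one_mul, Finset.sum_mul]

theorem FT_eq_fourier (w : Eu d → ℂ) (ξ : Eu d) : FT w ξ = 𝓕 w ((2 * Real.pi)⁻¹ • ξ) := by
  rw [Real.fourier_eq', FT]
  congr 1 with x
  rw [real_inner_smul_right, smul_eq_mul]
  congr 2
  push_cast
  field_simp

theorem norm_FT_le (w : Eu d → ℂ) (ξ : Eu d) : ‖FT w ξ‖ ≤ ∫ x, ‖w x‖ :=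
  (norm_integral_le_integral_norm _).trans_eq <| by
    congr 1 with x
    rw [norm_mul, Complex.norm_exp]
    simp

theorem FT_lineDerivOp (w : 𝓢(Eu d, ℂ)) (m ξ : Eu d) :
    FT (∂_{m} w : 𝓢(Eu d, ℂ)) ξ = Complex.I * (⟪ξ, m⟫ : ℝ) * FT w ξ := by
  have h := congrArg (· ((2 * Real.pi)⁻¹ • ξ)) (SchwartzMap.fourier_lineDerivOp_eq w m)
  have hg : (fun x : Eu d => ⟪x, m⟫).HasTemperateGrowth :=
    ((innerSL ℝ).flip m).hasTemperateGrowth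
  simp only [SchwartzMap.fourier_coe, smul_apply,
    SchwartzMap.smulLeftCLM_apply_apply hg, real_inner_smul_left] at h
  rw [FT_eq_fourier, FT_eq_fourier, h]
  simp only [smul_eq_mul, Complex.real_smul]
  push_cast
  field_simp

theorem pdL_replicate (w : 𝓢(Eu d, ℂ)) (j : Fin d) (k : ℕ) :
    pdL (List.replicate k j) w = ⇑((∂_{EuclideanSpace.single j (1 : ℝ)})^[k] w) := by
  induction k with
  | zero => rfl
  | succ k ih =>
    ext x
    rw [Function.iterate_succ_apply', SchwartzMap.lineDerivOp_apply_eq_fderiv, ← ih]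
    rfl

theorem FT_pdL_replicate (w : 𝓢(Eu d, ℂ)) (j : Fin d) (k : ℕ) (ξ : Eu d) :
    FT (pdL (List.replicate k j) w) ξ = (Complex.I * ξ j) ^ k * FT w ξ := by
  rw [pdL_replicate]
  induction k with
  | zero => simp
  | succ k ih =>
    rw [Function.iterate_succ_apply', FT_lineDerivOp, ih, EuclideanSpace.inner_single_right]
    simp only [one_mul, RCLike.conj_to_real]
    ring

theorem UnifModerate.norm_FT {g : ℝ → Eu d → ℂ}
    (h : UnifModerate fun ε x => jap x ^ (2 * (d + 1)) * ‖g ε x‖) :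
    UnifModerate fun ε (ξ : Eu d) => ‖FT (g ε) ξ‖ := by
  obtain ⟨N, hN⟩ := h
  have hint : Integrable fun x : Eu d => (jap x ^ (2 * (d + 1)))⁻¹ := by
    refine (integrable_rpow_neg_one_add_norm_sq (E := Eu d) (μ := volume)
      (r := 2 * (d + 1)) (by simp; linarith)).congr (Eventually.of_forall fun x => ?_)
    dsimp only
    rw [pow_mul, jap_sq, ← Real.rpow_natCast (1 + ‖x‖ ^ 2), ← Real.rpow_neg (by positivity)]
    push_cast
    ring_nf
  refine UnifModerate.of_le_mul_rpow (∫ x : Eu d, (jap x ^ (2 * (d + 1)))⁻¹) N ?_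
  filter_upwards [hN] with ε hε ξ
  have hpt : ∀ x, ‖g ε x‖ ≤ ε ^ (-(N : ℝ)) * (jap x ^ (2 * (d + 1)))⁻¹ := fun x => by
    rw [← div_eq_mul_inv, le_div_iff₀ (pow_pos (jap_pos x) _), mul_comm]
    exact hε x
  calc ‖FT (g ε) ξ‖ ≤ ∫ x, ‖g ε x‖ := norm_FT_le _ _
    _ ≤ ∫ x, ε ^ (-(N : ℝ)) * (jap x ^ (2 * (d + 1)))⁻¹ :=
        integral_mono_of_nonneg (Eventually.of_forall fun x => norm_nonneg _)
          (hint.const_mul _) (Eventually.of_forall hpt)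
    _ = _ := by rw [integral_const_mul, mul_comm]

section SModNet

variable {v : ℝ → 𝓢(Eu d, ℂ)}

theorem SModNet.unifModerate (hv : SModNet v) (L : List (Fin d)) (β : Fin d → ℕ) :
    UnifModerate fun ε x => |∏ j, x j ^ β j| * ‖pdL L (v ε) x‖ := by
  obtain ⟨N, hN⟩ := hv L β
  exact ⟨N, smallE_iff_eventually.1 hN⟩

theorem SModNet.unifModerate_jap_pow_mul_pdL (hv : SModNet v) (L : List (Fin d)) (q : ℕ) :
    UnifModerate fun ε x => jap x ^ (2 * q) * ‖pdL L (v ε) x‖ := by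
  refine UnifModerate.jap_pow_mul (fun _ _ => norm_nonneg _) q
    ((hv.unifModerate L 0).mono (Eventually.of_forall fun ε x => by simp))
    fun j => (hv.unifModerate L (Pi.single j (2 * q))).mono (Eventually.of_forall fun ε x => ?_)
  rw [Finset.prod_eq_single j (fun i _ hi => by simp [hi]) (by simp), Pi.single_eq_same,
    abs_of_nonneg ((even_two_mul q).pow_nonneg _)]

theorem SModNet.unifModerate_jap_pow_mul_FT (hv : SModNet v) (q : ℕ) :
    UnifModerate fun ε ξ => jap ξ ^ (2 * q) * ‖FT (v ε) ξ‖ := by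
  refine UnifModerate.jap_pow_mul (fun _ _ => norm_nonneg _) q
    (hv.unifModerate_jap_pow_mul_pdL [] (d + 1)).norm_FT fun j =>
    (hv.unifModerate_jap_pow_mul_pdL (List.replicate (2 * q) j) (d + 1)).norm_FT.mono
      (Eventually.of_forall fun ε ξ => le_of_eq ?_)
  rw [FT_pdL_replicate, norm_mul, norm_pow, norm_mul, Complex.norm_I, one_mul,
    Complex.norm_real, Real.norm_eq_abs, (even_two_mul q).pow_abs]

theorem SModNet.exists_eventually_norm_FT_le (hv : SModNet v) (m : ℕ) :
    ∃ N : ℕ, ∀ᶠ ε in 𝓝[>] 0, ∀ ξ : Eu d, ε ^ (-((N + m : ℕ) : ℝ)) ≤ ‖ξ‖ →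
      ‖FT (v ε) ξ‖ ≤ ε ^ (m : ℝ) := by
  obtain ⟨N, hN⟩ := hv.unifModerate_jap_pow_mul_FT 1
  refine ⟨N, ?_⟩
  filter_upwards [hN, eventually_mem_nhdsWithin] with ε hN (hε : 0 < ε) ξ hξ
  have := le_rpow_sub_of_rpow_neg_mul_le hε <| calc
    ε ^ (-((N + m : ℕ) : ℝ)) * ‖FT (v ε) ξ‖ ≤ jap ξ ^ (2 * 1) * ‖FT (v ε) ξ‖ := by
      gcongr
      exact hξ.trans ((norm_le_jap ξ).trans (le_self_pow₀ (one_le_jap ξ) (by norm_num)))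
    _ ≤ ε ^ (-(N : ℝ)) := hN ξ
  convert this using 2
  push_cast
  ring

end SModNet

theorem eventually_rpow_one_div_mem_Icc {k : ℕ} (hk : 2 ≤ k) :
    ∀ᶠ ε : ℝ in 𝓝[>] 0, ε ^ (1 / (k : ℝ)) ∈ Icc (2 * ε) (1 / k) := by
  have hk₀ : (0 : ℝ) < 1 / k := by positivity
  have hk₁ : 1 / (k : ℝ) < 1 := by
    rw [div_lt_one (by positivity)]
    exact_mod_cast hk
  filter_upwards [eventually_rpow_le (sub_pos.2 hk₁) one_half_pos, eventually_rpow_le hk₀ hk₀,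
    eventually_mem_nhdsWithin] with ε h₁ h₂ hε
  refine ⟨?_, h₂⟩
  calc 2 * ε = 2 * ε ^ (1 - 1 / (k : ℝ)) * ε ^ (1 / (k : ℝ)) := by
        rw [mul_assoc, ← Real.rpow_add hε, sub_add_cancel, Real.rpow_one]
    _ ≤ ε ^ (1 / (k : ℝ)) := by nlinarith [Real.rpow_nonneg (le_of_lt hε) (1 / (k : ℝ))]

theorem eventually_one_div_le {ι : Type*} {l : Filter ι} {κ : ι → ℕ} (hκ : Tendsto κ l atTop)
    {b : ℝ} (hb : 0 < b) : ∀ᶠ i in l, 1 / (κ i : ℝ) ≤ b :=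
  ((tendsto_const_div_atTop_nhds_zero_nat 1).comp hκ).eventually (Iic_mem_nhds hb)

theorem slowInfPos_rpow_one_div_div_two {κ : ℝ → ℕ} (hκ : Tendsto κ (𝓝[>] 0) atTop)
    (hlim : Tendsto (fun ε => ε ^ (1 / (κ ε : ℝ))) (𝓝[>] 0) (𝓝 0)) :
    SlowInfPos fun ε => ε ^ (1 / (κ ε : ℝ)) / 2 := by
  refine ⟨fun ε hε _ => by positivity, fun a ha => smallE_iff_eventually.2 ?_⟩
  filter_upwards [eventually_one_div_le hκ (half_pos ha), hlim.eventually (Iic_mem_nhds ha),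
    eventually_rpow_le (half_pos ha) one_half_pos, Ioc_mem_nhdsGT one_pos]
    with ε hκε (hsmall : _ ≤ a) hhalf ⟨hε, hε₁⟩
  have hpos := Real.rpow_nonneg hε.le (1 / (κ ε : ℝ))
  refine ⟨?_, by linarith⟩
  calc ε ^ a = ε ^ (a / 2) * ε ^ (a / 2) := by rw [← Real.rpow_add hε, add_halves]
    _ ≤ 1 / 2 * ε ^ (1 / (κ ε : ℝ)) :=
        mul_le_mul hhalf (Real.rpow_le_rpow_of_exponent_ge hε hε₁ hκε) (by positivity)
          (by norm_num)
    _ = _ := by ring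

theorem slowScalePos_two_mul_rpow_neg_one_div {κ : ℝ → ℕ} (hκ : Tendsto κ (𝓝[>] 0) atTop) :
    SlowScalePos fun ε => 2 * ε ^ (-(1 / (κ ε : ℝ))) := by
  refine ⟨fun ε hε _ => by positivity, fun a ha => smallE_iff_eventually.2 ?_⟩
  filter_upwards [eventually_one_div_le hκ (half_pos ha), eventually_le_rpow_neg (half_pos ha) 2,
    Ioc_mem_nhdsGT one_pos] with ε hκε h2 ⟨hε, hε₁⟩
  calc 2 * ε ^ (-(1 / (κ ε : ℝ))) ≤ ε ^ (-(a / 2)) * ε ^ (-(a / 2)) :=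
        mul_le_mul h2 (Real.rpow_le_rpow_of_exponent_ge hε hε₁ (neg_le_neg hκε))
          (by positivity) (by positivity)
    _ = ε ^ (-a) := by rw [← Real.rpow_add hε, ← neg_add, add_halves]

section Cones

variable (v : ℝ → 𝓢(Eu d, ℂ)) (ξ₀ : ℝ → Eu d)

def FTNegligibleOnSlowCones : Prop :=
  ∃ r R : ℝ → ℝ, SlowInfPos r ∧ SlowScalePos R ∧
    ∀ ξ : ℝ → Eu d, ModNet ξ → (∀ ε : ℝ, 0 < ε → ε ≤ 1 → ξ ε ≠ 0) →
      (∃ n n' : ℝ → ℝ, NegNet n ∧ NegNet n' ∧ SmallE fun ε =>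
        ‖‖ξ ε‖⁻¹ • ξ ε - ξ₀ ε‖ ≤ r ε + n ε ∧ R ε - n' ε ≤ ‖ξ ε‖) →
      NegNet fun ε => FT (v ε) (ξ ε)

def FTNegligibleOnFastCones : Prop :=
  ∀ ξ : ℝ → Eu d, ModNet ξ → FastScale ξ → FastInf (fun ε => ‖ξ ε‖⁻¹ • ξ ε - ξ₀ ε) →
    NegNet fun ε => FT (v ε) (ξ ε)

def FTSmallOnTruncatedCones : Prop :=
  ∀ m : ℕ, 1 ≤ m → SmallE fun ε => ∀ ξ : Eu d,
    ε ^ (-(1 / (m : ℝ))) ≤ ‖ξ‖ → ‖‖ξ‖⁻¹ • ξ - ξ₀ ε‖ ≤ ε ^ (1 / (m : ℝ)) →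
    ‖FT (v ε) ξ‖ ≤ ε ^ (m : ℝ)

def FTRapidDecayOnCones : Prop :=
  ∃ N : ℕ, ∀ m : ℕ, 1 ≤ m → SmallE fun ε => ∀ ξ : Eu d, ξ ≠ 0 →
    ‖‖ξ‖⁻¹ • ξ - ξ₀ ε‖ ≤ ε ^ (1 / (m : ℝ)) → jap ξ ^ m * ‖FT (v ε) ξ‖ ≤ ε ^ (-(N : ℝ))

variable {v ξ₀}

theorem FTNegligibleOnSlowCones.fastCones (hξ₀ : ∀ ε : ℝ, 0 < ε → ε ≤ 1 → ‖ξ₀ ε‖ = 1)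
    (h : FTNegligibleOnSlowCones v ξ₀) : FTNegligibleOnFastCones v ξ₀ := by
  obtain ⟨r, R, hr, hR, h⟩ := h
  rintro ξ hmod ⟨a, ha, hfast⟩ ⟨b, hb, hdir⟩
  rw [smallE_iff_eventually] at hfast hdir
  set ξ' : ℝ → Eu d := fun ε => if ξ ε = 0 then ξ₀ ε else ξ ε
  have hξ' : ξ' =ᶠ[𝓝[>] 0] ξ := by
    filter_upwards [hfast, eventually_mem_nhdsWithin] with ε hε (hε₀ : 0 < ε)
    have : ξ ε ≠ 0 := norm_pos_iff.1 ((Real.rpow_pos_of_pos hε₀ _).trans_le hε)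
    simp [ξ', this]
  have hne : ∀ ε : ℝ, 0 < ε → ε ≤ 1 → ξ' ε ≠ 0 := fun ε hε hε₁ => by
    by_cases h0 : ξ ε = 0
    · simp [ξ', h0, ← norm_ne_zero_iff, hξ₀ ε hε hε₁]
    · simp [ξ', h0]
  refine (h ξ' (hmod.congr hξ'.symm) hne
    ⟨fun _ => 0, fun _ => 0, negNet_zero, negNet_zero, ?_⟩).congr
    (hξ'.mono fun ε h => by simp only [h])
  rw [smallE_iff_eventually]
  filter_upwards [hξ', hfast, hdir, smallE_iff_eventually.1 (hr.2 b hb),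
    smallE_iff_eventually.1 (hR.2 a ha)] with ε heq hfast hdir hr hR
  simp only [heq, add_zero, sub_zero]
  exact ⟨hdir.trans hr.1, hR.trans hfast⟩

theorem FTNegligibleOnFastCones.truncatedCones (hv : SModNet v)
    (hξ₀ : ∀ ε : ℝ, 0 < ε → ε ≤ 1 → ‖ξ₀ ε‖ = 1) (h : FTNegligibleOnFastCones v ξ₀) :
    FTSmallOnTruncatedCones v ξ₀ := by
  intro m hm
  obtain ⟨N, hfar⟩ := hv.exists_eventually_norm_FT_le m
  have hm₀ : (0 : ℝ) < 1 / m := by positivity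
  have hnear : ∀ᶠ ε in 𝓝[>] 0, ∀ ξ : Eu d, (ε ^ (-(1 / (m : ℝ))) ≤ ‖ξ‖ ∧
      ‖‖ξ‖⁻¹ • ξ - ξ₀ ε‖ ≤ ε ^ (1 / (m : ℝ)) ∧ ‖ξ‖ ≤ ε ^ (-((N + m : ℕ) : ℝ))) →
      ‖FT (v ε) ξ‖ ≤ ε ^ (m : ℝ) := by
    refine eventually_forall_of_forall_selection ?_ fun ξ hξ => ?_
    · filter_upwards [Ioc_mem_nhdsGT one_pos] with ε ⟨hε, hε₁⟩
      have hpos := Real.rpow_pos_of_pos hε (-(1 / (m : ℝ)))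
      have hnorm : ‖ε ^ (-(1 / (m : ℝ))) • ξ₀ ε‖ = ε ^ (-(1 / (m : ℝ))) := by
        rw [norm_smul_of_nonneg hpos.le, hξ₀ ε hε hε₁, mul_one]
      have hexp : 1 / (m : ℝ) ≤ ((N + m : ℕ) : ℝ) := by
        have : 1 / (m : ℝ) ≤ 1 := div_le_one_of_le₀ (by exact_mod_cast hm) (by positivity)
        have : (1 : ℝ) ≤ m := by exact_mod_cast hm
        push_cast
        linarith [(N.cast_nonneg : (0 : ℝ) ≤ N)]
      refine ⟨ε ^ (-(1 / (m : ℝ))) • ξ₀ ε, hnorm.ge, ?_, ?_⟩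
      · rw [hnorm, inv_smul_smul₀ hpos.ne', sub_self, norm_zero]
        positivity
      · rw [hnorm]
        exact Real.rpow_le_rpow_of_exponent_ge hε hε₁ (neg_le_neg hexp)
    · exact smallE_iff_eventually.1 <| h ξ
        ⟨N + m, smallE_iff_eventually.2 (hξ.mono fun ε h => h.2.2)⟩
        ⟨1 / m, hm₀, smallE_iff_eventually.2 (hξ.mono fun ε h => h.1)⟩
        ⟨1 / m, hm₀, smallE_iff_eventually.2 (hξ.mono fun ε h => h.2.1)⟩ m
  rw [smallE_iff_eventually]
  filter_upwards [hfar, hnear] with ε hfar hnear ξ h₁ h₂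
  rcases le_total ‖ξ‖ (ε ^ (-((N + m : ℕ) : ℝ))) with h₃ | h₃
  · exact hnear ξ ⟨h₁, h₂, h₃⟩
  · exact hfar ξ h₃

theorem FTSmallOnTruncatedCones.rapidDecay (hv : SModNet v) (h : FTSmallOnTruncatedCones v ξ₀) :
    FTRapidDecayOnCones v ξ₀ := by
  obtain ⟨N₀, h₀⟩ := hv.unifModerate_jap_pow_mul_FT 0
  refine ⟨N₀ + 2, fun m hm => ?_⟩
  obtain ⟨N, hN⟩ := hv.unifModerate_jap_pow_mul_FT m
  rw [smallE_iff_eventually]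
  filter_upwards [h₀, hN, smallE_iff_eventually.1 (h (m + N) (by omega)),
    eventually_le_rpow_neg one_pos (2 ^ m), Ioc_mem_nhdsGT one_pos]
    with ε h₀ hN hsmall h2 ⟨hε, hε₁⟩ ξ _ hdir
  have hm₀ : (0 : ℝ) < m := by exact_mod_cast hm
  have hFT₀ : ‖FT (v ε) ξ‖ ≤ ε ^ (-(N₀ : ℝ)) := by simpa using h₀ ξ
  rcases le_or_gt (ε ^ (-(1 / (m : ℝ)))) ‖ξ‖ with hfar | hnear
  · have hexp : 1 / ((m + N : ℕ) : ℝ) ≤ 1 / m :=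
      one_div_le_one_div_of_le hm₀ (by exact_mod_cast Nat.le_add_right m N)
    have hFT : ‖FT (v ε) ξ‖ ≤ ε ^ ((m + N : ℕ) : ℝ) :=
      hsmall ξ ((Real.rpow_le_rpow_of_exponent_ge hε hε₁ (neg_le_neg hexp)).trans hfar)
        (hdir.trans (Real.rpow_le_rpow_of_exponent_ge hε hε₁ hexp))
    have hsq : (jap ξ ^ m * ‖FT (v ε) ξ‖) ^ 2 ≤ 1 := calc
      (jap ξ ^ m * ‖FT (v ε) ξ‖) ^ 2 = jap ξ ^ (2 * m) * ‖FT (v ε) ξ‖ * ‖FT (v ε) ξ‖ := by ring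
      _ ≤ ε ^ (-(N : ℝ)) * ε ^ ((m + N : ℕ) : ℝ) :=
          mul_le_mul (hN ξ) hFT (norm_nonneg _) (by positivity)
      _ = ε ^ (m : ℝ) := by
          rw [← Real.rpow_add hε]
          push_cast
          ring_nf
      _ ≤ 1 := Real.rpow_le_one hε.le hε₁ hm₀.le
    refine ((pow_le_one_iff_of_nonneg (by have := jap_pos ξ; positivity) two_ne_zero).1
      hsq).trans ?_
    exact Real.one_le_rpow_of_pos_of_le_one_of_nonpos hε hε₁ (neg_nonpos.2 (Nat.cast_nonneg _))
  · calc jap ξ ^ m * ‖FT (v ε) ξ‖ ≤ 2 ^ m * ε ^ (-1 : ℝ) * ε ^ (-(N₀ : ℝ)) :=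
          mul_le_mul (jap_pow_le_of_norm_le hε hε₁ (by omega) hnear.le) hFT₀ (norm_nonneg _)
            (by positivity)
      _ ≤ ε ^ (-1 : ℝ) * ε ^ (-1 : ℝ) * ε ^ (-(N₀ : ℝ)) := by gcongr
      _ = ε ^ (-((N₀ + 2 : ℕ) : ℝ)) := by
          rw [← Real.rpow_add hε, ← Real.rpow_add hε]
          push_cast
          ring_nf

theorem FTRapidDecayOnCones.truncatedCones (h : FTRapidDecayOnCones v ξ₀) :
    FTSmallOnTruncatedCones v ξ₀ := by
  obtain ⟨N, h⟩ := h
  intro m hm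
  have hm₀ : (0 : ℝ) < m := by exact_mod_cast hm
  rw [smallE_iff_eventually]
  have hM : 1 ≤ m * (N + m) := Nat.one_le_iff_ne_zero.2 (by positivity)
  filter_upwards [smallE_iff_eventually.1 (h (m * (N + m)) hM), Ioc_mem_nhdsGT one_pos]
    with ε hdecay ⟨hε, hε₁⟩ ξ hfar hdir
  have hexp : 1 / ((m * (N + m) : ℕ) : ℝ) ≤ 1 / m :=
    one_div_le_one_div_of_le hm₀ (by exact_mod_cast Nat.le_mul_of_pos_right m (by omega))
  have hjap : ε ^ (-((N + m : ℕ) : ℝ)) ≤ jap ξ ^ (m * (N + m)) := calc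
    ε ^ (-((N + m : ℕ) : ℝ)) = (ε ^ (-(1 / (m : ℝ)))) ^ (m * (N + m)) := by
      rw [← Real.rpow_natCast, ← Real.rpow_mul hε.le]
      push_cast
      field_simp
    _ ≤ jap ξ ^ (m * (N + m)) := by
      gcongr
      exact hfar.trans (norm_le_jap ξ)
  have := le_rpow_sub_of_rpow_neg_mul_le hε <| calc
    ε ^ (-((N + m : ℕ) : ℝ)) * ‖FT (v ε) ξ‖ ≤ jap ξ ^ (m * (N + m)) * ‖FT (v ε) ξ‖ := by gcongr
    _ ≤ ε ^ (-(N : ℝ)) :=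
      hdecay ξ (norm_pos_iff.1 ((Real.rpow_pos_of_pos hε _).trans_le hfar))
        (hdir.trans (Real.rpow_le_rpow_of_exponent_ge hε hε₁ hexp))
  convert this using 2
  push_cast
  ring

theorem FTSmallOnTruncatedCones.slowCones (h : FTSmallOnTruncatedCones v ξ₀) :
    FTNegligibleOnSlowCones v ξ₀ := by
  -- the bracket `2 ε ≤ ε ^ (1 / k) ≤ 1 / k` makes `ε ^ (1 / κ ε)` a slow scale infinitesimal
  -- that absorbs negligible perturbations
  obtain ⟨κ, hκ, hκP⟩ := exists_tendsto_atTop_eventually_diag (P := fun k ε => 2 ≤ k →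
      ε ^ (1 / (k : ℝ)) ∈ Icc (2 * ε) (1 / k) ∧ ∀ ξ : Eu d,
        ε ^ (-(1 / (k : ℝ))) ≤ ‖ξ‖ → ‖‖ξ‖⁻¹ • ξ - ξ₀ ε‖ ≤ ε ^ (1 / (k : ℝ)) →
        ‖FT (v ε) ξ‖ ≤ ε ^ (k : ℝ)) fun k => by
    by_cases hk : 2 ≤ k
    · filter_upwards [eventually_rpow_one_div_mem_Icc hk,
        smallE_iff_eventually.1 (h k (by omega))] with ε h₁ h₂ using fun _ => ⟨h₁, h₂⟩
    · exact Eventually.of_forall fun _ hk' => absurd hk' hk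
  have hlim : Tendsto (fun ε => ε ^ (1 / (κ ε : ℝ))) (𝓝[>] 0) (𝓝 0) := by
    refine tendsto_of_tendsto_of_tendsto_of_le_of_le' tendsto_const_nhds
      ((tendsto_const_div_atTop_nhds_zero_nat 1).comp hκ) ?_ ?_
    · filter_upwards [eventually_mem_nhdsWithin] with ε (hε : 0 < ε) using by positivity
    · filter_upwards [hκP, hκ.eventually_ge_atTop 2] with ε hP hκε using (hP hκε).1.2
  refine ⟨_, _, slowInfPos_rpow_one_div_div_two hκ hlim,
    slowScalePos_two_mul_rpow_neg_one_div hκ, ?_⟩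
  rintro ξ - - ⟨n, n', hn, hn', hcone⟩ m
  rw [smallE_iff_eventually]
  filter_upwards [hκP, hκ.eventually_ge_atTop (max m 2), smallE_iff_eventually.1 (hn 1),
    smallE_iff_eventually.1 (hn' 1), smallE_iff_eventually.1 hcone, Ioc_mem_nhdsGT one_pos]
    with ε hP hκε hnε hn'ε ⟨hdir, hnorm⟩ ⟨hε, hε₁⟩
  obtain ⟨⟨h2ε, -⟩, hFT⟩ := hP (le_of_max_le_right hκε)
  simp only [Nat.cast_one, Real.rpow_one, Real.norm_eq_abs] at hnε hn'ε
  have hfar : ε ^ (-(1 / (κ ε : ℝ))) ≤ ‖ξ ε‖ := by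
    have := Real.one_le_rpow_of_pos_of_le_one_of_nonpos hε hε₁
      (neg_nonpos.2 (by positivity) : -(1 / (κ ε : ℝ)) ≤ 0)
    linarith [le_abs_self (n' ε)]
  have hnear : ‖‖ξ ε‖⁻¹ • ξ ε - ξ₀ ε‖ ≤ ε ^ (1 / (κ ε : ℝ)) := by
    linarith [le_abs_self (n ε)]
  exact (hFT _ hfar hnear).trans
    (Real.rpow_le_rpow_of_exponent_ge hε hε₁ (by exact_mod_cast le_of_max_le_left hκε))

end Cones

end

/-- Lemma 3.3: characterizations of the vanishing of the Fourier
transform of an S-moderate net of Schwartz functions in a generalized direction. -/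
theorem stmt1 {d : ℕ} (v : ℝ → SchwartzMap (Eu d) ℂ) (hv : SModNet v)
    (ξ₀ : ℝ → Eu d) (hξ₀ : ∀ ε : ℝ, 0 < ε → ε ≤ 1 → ‖ξ₀ ε‖ = 1) :
    [ -- (1) vanishing on a conic slow scale neighbourhood, for large slow scale |ξ|
      (∃ r R : ℝ → ℝ, SlowInfPos r ∧ SlowScalePos R ∧
        ∀ ξ : ℝ → Eu d, ModNet ξ → (∀ ε : ℝ, 0 < ε → ε ≤ 1 → ξ ε ≠ 0) →
          (∃ n n' : ℝ → ℝ, NegNet n ∧ NegNet n' ∧ SmallE fun ε =>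
            ‖‖ξ ε‖⁻¹ • ξ ε - ξ₀ ε‖ ≤ r ε + n ε ∧ R ε - n' ε ≤ ‖ξ ε‖) →
          NegNet fun ε => FT (⇑(v ε)) (ξ ε)),
      -- (2) vanishing at fast scale points in fast scale directions to ξ₀
      (∀ ξ : ℝ → Eu d, ModNet ξ → FastScale ξ →
        FastInf (fun ε => ‖ξ ε‖⁻¹ • ξ ε - ξ₀ ε) →
        NegNet fun ε => FT (⇑(v ε)) (ξ ε)),
      -- (3) sup estimates on the truncated cones
      (∀ m : ℕ, 1 ≤ m → SmallE fun ε => ∀ ξ : Eu d,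
        ε ^ (-(1 / (m : ℝ))) ≤ ‖ξ‖ → ‖‖ξ‖⁻¹ • ξ - ξ₀ ε‖ ≤ ε ^ (1 / (m : ℝ)) →
        ‖FT (⇑(v ε)) ξ‖ ≤ ε ^ (m : ℝ)),
      -- (4) rapid decrease estimates on the cones
      (∃ N : ℕ, ∀ m : ℕ, 1 ≤ m → SmallE fun ε => ∀ ξ : Eu d, ξ ≠ 0 →
        ‖‖ξ‖⁻¹ • ξ - ξ₀ ε‖ ≤ ε ^ (1 / (m : ℝ)) →
        jap ξ ^ m * ‖FT (⇑(v ε)) ξ‖ ≤ ε ^ (-(N : ℝ))) ].TFAE := by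
  tfae_have 1 → 2 := FTNegligibleOnSlowCones.fastCones hξ₀
  tfae_have 2 → 3 := FTNegligibleOnFastCones.truncatedCones hv hξ₀
  tfae_have 3 → 4 := FTSmallOnTruncatedCones.rapidDecay hv
  tfae_have 4 → 3 := FTRapidDecayOnCones.truncatedCones
  tfae_have 3 → 1 := FTSmallOnTruncatedCones.slowCones
  tfae_finish
end
end

section
/- Let (ξ_ε) be a moderate fast scale net in ℝ^d and let (η_ε) be a slow scale net in ℝ^d. Then ξ_ε − η_ε ≠ 0 for small ε, the net (ξ_ε − η_ε) is moderate and fast scale, and the net ((ξ_ε − η_ε)/|ξ_ε − η_ε| − ξ_ε/|ξ_ε|) is a fast scale infinitesimal. -/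
open MeasureTheory Set Metric
open scoped RealInnerProductSpace

noncomputable section

lemma eps_rpow_le {c δ ε : ℝ} (hc : 0 < c) (hδ : 0 < δ) (hε : 0 ≤ ε)
    (h : ε ≤ δ ^ c⁻¹) : ε ^ c ≤ δ := by
  have h1 : ε ^ c ≤ (δ ^ c⁻¹) ^ c := Real.rpow_le_rpow hε h hc.le
  rwa [← Real.rpow_mul hδ.le, inv_mul_cancel₀ hc.ne', Real.rpow_one] at h1

lemma normalize_sub_le {V : Type*} [NormedAddCommGroup V] [NormedSpace ℝ V]
    {x y : V} (hx : x ≠ 0) (hy : y ≠ 0) :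
    ‖‖x‖⁻¹ • x - ‖y‖⁻¹ • y‖ ≤ 2 * ‖x - y‖ / ‖x‖ := by
  have hxn : (0:ℝ) < ‖x‖ := norm_pos_iff.mpr hx
  have hyn : (0:ℝ) < ‖y‖ := norm_pos_iff.mpr hy
  have hdecomp : ‖x‖⁻¹ • x - ‖y‖⁻¹ • y
      = ‖x‖⁻¹ • (x - y) + (‖x‖⁻¹ - ‖y‖⁻¹) • y := by
    rw [smul_sub, sub_smul]; abel
  rw [hdecomp]
  have h1 : ‖‖x‖⁻¹ • (x - y)‖ = ‖x‖⁻¹ * ‖x - y‖ := by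
    rw [norm_smul, Real.norm_eq_abs, abs_of_pos (inv_pos.mpr hxn)]
  have h2 : ‖(‖x‖⁻¹ - ‖y‖⁻¹) • y‖ = |‖x‖⁻¹ - ‖y‖⁻¹| * ‖y‖ := by
    rw [norm_smul, Real.norm_eq_abs]
  have h3 : |‖x‖⁻¹ - ‖y‖⁻¹| = |‖y‖ - ‖x‖| / (‖x‖ * ‖y‖) := by
    rw [show ‖x‖⁻¹ - ‖y‖⁻¹ = (‖y‖ - ‖x‖) / (‖x‖ * ‖y‖) by
      field_simp]
    rw [abs_div, abs_of_pos (by positivity : (0:ℝ) < ‖x‖ * ‖y‖)]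
  have h4 : |‖y‖ - ‖x‖| ≤ ‖x - y‖ := by
    rw [abs_sub_comm]
    exact abs_norm_sub_norm_le x y
  calc ‖‖x‖⁻¹ • (x - y) + (‖x‖⁻¹ - ‖y‖⁻¹) • y‖
      ≤ ‖‖x‖⁻¹ • (x - y)‖ + ‖(‖x‖⁻¹ - ‖y‖⁻¹) • y‖ := norm_add_le _ _
    _ = ‖x‖⁻¹ * ‖x - y‖ + |‖y‖ - ‖x‖| / (‖x‖ * ‖y‖) * ‖y‖ := by rw [h1, h2, h3]
    _ ≤ ‖x‖⁻¹ * ‖x - y‖ + ‖x - y‖ / (‖x‖ * ‖y‖) * ‖y‖ := by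
        gcongr
    _ = 2 * ‖x - y‖ / ‖x‖ := by field_simp; ring

set_option maxHeartbeats 1000000 in
/-- subtracting a slow scale net from a moderate fast scale net keeps
it nonzero, moderate and fast scale, and perturbs its direction only by a fast scale
infinitesimal. -/
theorem stmt3 {d : ℕ} (ξ η : ℝ → Eu d) (hξmod : ModNet ξ) (hξfast : FastScale ξ)
    (hη : SlowScale η) :
    (SmallE fun ε => ξ ε - η ε ≠ 0) ∧
    ModNet (fun ε => ξ ε - η ε) ∧
    FastScale (fun ε => ξ ε - η ε) ∧
    FastInf (fun ε => ‖ξ ε - η ε‖⁻¹ • (ξ ε - η ε) - ‖ξ ε‖⁻¹ • ξ ε) := by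
  obtain ⟨N, ε₁, hε₁, hN⟩ := hξmod
  obtain ⟨a, ha, ε₂, hε₂, hfa⟩ := hξfast
  obtain ⟨ε₃, hε₃, hη1⟩ := hη 1 one_pos
  obtain ⟨ε₄, hε₄, hηa⟩ := hη (a/4) (by positivity)
  set δ : ℝ := (1/4 : ℝ) ^ (a/4)⁻¹ with hδdef
  have hδpos : 0 < δ := Real.rpow_pos_of_pos (by norm_num) _
  set ε₀ : ℝ := min (min ε₁ ε₂) (min (min ε₃ ε₄) (min (1/2) δ)) with hε₀def
  have hε₀ : 0 < ε₀ := by positivity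
  -- common facts
  have key : ∀ ε : ℝ, 0 < ε → ε ≤ ε₀ →
      ‖ξ ε‖ ≤ ε ^ (-(N:ℝ)) ∧ ε ^ (-a) ≤ ‖ξ ε‖ ∧ ‖η ε‖ ≤ ε ^ (-(1:ℝ)) ∧
      ‖η ε‖ ≤ ε ^ (-(a/4)) ∧ ε ≤ 1/2 ∧ ε ^ (a/4) ≤ 1/4 := by
    intro ε hε hle
    refine ⟨hN ε hε (hle.trans (by simp [hε₀def])),
      hfa ε hε (hle.trans (by simp [hε₀def])),
      hη1 ε hε (hle.trans (by simp [hε₀def])),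
      hηa ε hε (hle.trans (by simp [hε₀def])),
      hle.trans (by simp [hε₀def]), ?_⟩
    exact eps_rpow_le (by positivity) (by norm_num) hε.le
      (hle.trans ((min_le_right _ _).trans ((min_le_right _ _).trans (min_le_right _ _))))
  have hlow : ∀ ε : ℝ, 0 < ε → ε ≤ ε₀ → (3/4) * ε ^ (-a) ≤ ‖ξ ε - η ε‖ := by
    intro ε hε hle
    obtain ⟨_, h2, _, h4, _, h6⟩ := key ε hε hle
    have hεle1 : ε ≤ 1 := (hle.trans (min_le_right _ _ |>.trans
      ((min_le_right _ _).trans (min_le_left _ _)))).trans (by norm_num)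
    have hη4 : ‖η ε‖ ≤ (1/4) * ε ^ (-a) := by
      have : ε ^ (-(a/4)) = ε ^ (3*a/4) * ε ^ (-a) := by
        rw [← Real.rpow_add hε]; ring_nf
      have h34 : ε ^ (3*a/4) ≤ ε ^ (a/4) :=
        Real.rpow_le_rpow_of_exponent_ge hε hεle1 (by linarith)
      calc ‖η ε‖ ≤ ε ^ (-(a/4)) := h4
        _ = ε ^ (3*a/4) * ε ^ (-a) := this
        _ ≤ (1/4) * ε ^ (-a) := by
            have hpa : (0:ℝ) < ε ^ (-a) := Real.rpow_pos_of_pos hε _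
            nlinarith
    have := norm_sub_norm_le (ξ ε) (η ε)
    have h := norm_le_norm_add_norm_sub' (ξ ε) (η ε)
    -- ‖ξ ε‖ ≤ ‖η ε‖ + ‖ξ ε - η ε‖
    have : ‖ξ ε‖ - ‖η ε‖ ≤ ‖ξ ε - η ε‖ := by
      have := norm_sub_norm_le (ξ ε) (η ε); linarith [this]
    linarith
  have hnz : ∀ ε : ℝ, 0 < ε → ε ≤ ε₀ → ξ ε - η ε ≠ 0 := by
    intro ε hε hle
    have h := hlow ε hε hle
    have hpa : (0:ℝ) < ε ^ (-a) := Real.rpow_pos_of_pos hε _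
    intro h0
    rw [h0, norm_zero] at h
    nlinarith
  refine ⟨⟨ε₀, hε₀, hnz⟩, ⟨N + 2, ε₀, hε₀, ?_⟩, ⟨a/2, by positivity, ε₀, hε₀, ?_⟩,
    ⟨a/2, by positivity, ε₀, hε₀, ?_⟩⟩
  · -- moderate
    intro ε hε hle
    obtain ⟨h1, _, h3, _, h5, _⟩ := key ε hε hle
    have hεle1 : ε ≤ 1 := by linarith
    have hmono1 : ε ^ (-(N:ℝ)) ≤ ε ^ (-((N:ℝ)+1)) :=
      Real.rpow_le_rpow_of_exponent_ge hε hεle1 (by linarith)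
    have hmono2 : ε ^ (-(1:ℝ)) ≤ ε ^ (-((N:ℝ)+1)) :=
      Real.rpow_le_rpow_of_exponent_ge hε hεle1 (by push_cast; linarith [Nat.cast_nonneg (α := ℝ) N])
    have hsplit : ε ^ (-((N:ℝ)+2)) = ε ^ (-(1:ℝ)) * ε ^ (-((N:ℝ)+1)) := by
      rw [← Real.rpow_add hε]; ring_nf
    have h2inv : (2:ℝ) ≤ ε ^ (-(1:ℝ)) := by
      rw [Real.rpow_neg_one]
      rw [le_inv_comm₀ (by norm_num) hε]
      linarith
    have hpos : (0:ℝ) < ε ^ (-((N:ℝ)+1)) := Real.rpow_pos_of_pos hε _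
    calc ‖ξ ε - η ε‖ ≤ ‖ξ ε‖ + ‖η ε‖ := norm_sub_le _ _
      _ ≤ ε ^ (-((N:ℝ)+1)) + ε ^ (-((N:ℝ)+1)) := by linarith
      _ = 2 * ε ^ (-((N:ℝ)+1)) := by ring
      _ ≤ ε ^ (-(1:ℝ)) * ε ^ (-((N:ℝ)+1)) := by nlinarith
      _ = ε ^ (-((N:ℝ)+2)) := hsplit.symm
      _ = ε ^ (-(((N:ℕ)+2 : ℕ):ℝ)) := by push_cast; ring_nf
  · -- fast scale
    intro ε hε hle
    obtain ⟨_, _, _, _, _, h6⟩ := key ε hε hle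
    have h := hlow ε hε hle
    have hsplit : ε ^ (-(a/2)) = ε ^ (a/2) * ε ^ (-a) := by
      rw [← Real.rpow_add hε]; ring_nf
    have hhalf : ε ^ (a/2) ≤ 3/4 := by
      have hεle1 : ε ≤ 1 := by
        have : ε ≤ 1/2 := (key ε hε hle).2.2.2.2.1
        linarith
      have : ε ^ (a/2) ≤ ε ^ (a/4) :=
        Real.rpow_le_rpow_of_exponent_ge hε hεle1 (by linarith)
      linarith
    have hpa : (0:ℝ) < ε ^ (-a) := Real.rpow_pos_of_pos hε _
    calc ε ^ (-(a/2)) = ε ^ (a/2) * ε ^ (-a) := hsplit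
      _ ≤ (3/4) * ε ^ (-a) := by nlinarith
      _ ≤ ‖ξ ε - η ε‖ := h
  · -- fast inf
    intro ε hε hle
    obtain ⟨_, h2, _, h4, _, h6⟩ := key ε hε hle
    have hεle1 : ε ≤ 1 := by
      have : ε ≤ 1/2 := (key ε hε hle).2.2.2.2.1
      linarith
    have hlo := hlow ε hε hle
    have hpa : (0:ℝ) < ε ^ (-a) := Real.rpow_pos_of_pos hε _
    have hxnz : ξ ε - η ε ≠ 0 := hnz ε hε hle
    have hynz : ξ ε ≠ 0 := by
      intro h0
      rw [h0, norm_zero] at h2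
      nlinarith
    have hnorm : (0:ℝ) < ‖ξ ε - η ε‖ := norm_pos_iff.mpr hxnz
    have hkey := normalize_sub_le hxnz hynz
    have hsub : ξ ε - η ε - ξ ε = -η ε := by abel
    rw [hsub, norm_neg] at hkey
    have hstep : 2 * ‖η ε‖ / ‖ξ ε - η ε‖ ≤ 2 * ε ^ (-(a/4)) / ((3/4) * ε ^ (-a)) := by
      apply div_le_div₀ (by positivity) (by linarith) (by positivity) hlo
    have heq : 2 * ε ^ (-(a/4)) / ((3/4) * ε ^ (-a)) = (8/3) * ε ^ (3*a/4) := by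
      rw [show ε ^ (-(a/4)) = ε ^ (3*a/4) * ε ^ (-a) by
        rw [← Real.rpow_add hε]; ring_nf]
      field_simp
      ring
    have hfin : (8/3 : ℝ) * ε ^ (3*a/4) ≤ ε ^ (a/2) := by
      have hs : ε ^ (3*a/4) = ε ^ (a/4) * ε ^ (a/2) := by
        rw [← Real.rpow_add hε]; ring_nf
      have hph : (0:ℝ) < ε ^ (a/2) := Real.rpow_pos_of_pos hε _
      rw [hs]
      nlinarith
    calc ‖‖ξ ε - η ε‖⁻¹ • (ξ ε - η ε) - ‖ξ ε‖⁻¹ • ξ ε‖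
        ≤ 2 * ‖η ε‖ / ‖ξ ε - η ε‖ := hkey
      _ ≤ 2 * ε ^ (-(a/4)) / ((3/4) * ε ^ (-a)) := hstep
      _ = (8/3) * ε ^ (3*a/4) := heq
      _ ≤ ε ^ (a/2) := hfin
end
end

section
/- Let Ω ⊆ ℝ^d be open, K ⊆ Ω compact, (x_{0,ε}) a net of points of K, and (u_ε) a moderate net of smooth functions on Ω. Then the following are equivalent: (1) for every moderate net (x_ε) with (x_ε − x_{0,ε}) a fast scale infinitesimal, there exists N ∈ ℕ such that for every multi-index α there is a negligible net (n^{(α)}_ε) with |∂^α u_ε(x_ε)| ≤ ε^{−N} + n^{(α)}_ε for small ε; (2) for every integer m ≥ 1 there exists N ∈ ℕ such that for every multi-index α, sup over {x : |x − x_{0,ε}| ≤ ε^{1/m}} of |∂^α u_ε(x)| ≤ ε^{−N} for small ε. -/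
open MeasureTheory Set Metric
open scoped RealInnerProductSpace

noncomputable section

lemma exists_seq_aux {α : Type*} (good : ℕ → ℝ → α → Prop)
    (H : ∀ (j : ℕ) (c : ℝ), 0 < c → ∃ ε : ℝ, ∃ z : α, 0 < ε ∧ ε ≤ c ∧ good j ε z) :
    ∃ (e : ℕ → ℝ) (y : ℕ → α), (∀ j, 0 < e j) ∧ (∀ j, e (j + 1) ≤ e j / 2) ∧
      e 0 ≤ 1 ∧ (∀ j, good j (e j) (y j)) := by
  choose f g h1 h2 h3 using H
  let F : ℕ → {c : ℝ // 0 < c} := fun j =>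
    Nat.rec ⟨f 0 1 one_pos, h1 0 1 one_pos⟩
      (fun j ih => ⟨f (j + 1) (ih.1 / 2) (half_pos ih.2),
        h1 (j + 1) (ih.1 / 2) (half_pos ih.2)⟩) j
  refine ⟨fun j => (F j).1,
    fun j => Nat.casesOn j (g 0 1 one_pos)
      (fun j => g (j + 1) ((F j).1 / 2) (half_pos (F j).2)),
    fun j => (F j).2,
    fun j => h2 (j + 1) ((F j).1 / 2) (half_pos (F j).2),
    h2 0 1 one_pos, fun j => ?_⟩
  cases j with
  | zero => exact h3 0 1 one_pos
  | succ j => exact h3 (j + 1) ((F j).1 / 2) (half_pos (F j).2)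


/-- pointwise characterization of `G^∞`-regularity on the fast scale
monad of a generalized point (with `N` depending on the point/scale). -/
theorem stmt12 {d : ℕ} (Ω K : Set (Eu d)) (hΩ : IsOpen Ω) (hK : IsCompact K)
    (hKΩ : K ⊆ Ω) (x₀ : ℝ → Eu d) (hx₀ : ∀ ε : ℝ, 0 < ε → ε ≤ 1 → x₀ ε ∈ K)
    (u : ℝ → Eu d → ℂ) (hu : SmoothModNetOn Ω u) :
    (∀ x : ℝ → Eu d, ModNet x → FastInf (fun ε => x ε - x₀ ε) →
      ∃ N : ℕ, ∀ L : List (Fin d), ∃ n' : ℝ → ℝ, NegNet n' ∧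
        SmallE fun ε => ‖pdL L (u ε) (x ε)‖ ≤ ε ^ (-(N : ℝ)) + n' ε) ↔
    (∀ m : ℕ, 1 ≤ m → ∃ N : ℕ, ∀ L : List (Fin d), SmallE fun ε =>
      ∀ x : Eu d, ‖x - x₀ ε‖ ≤ ε ^ (1 / (m : ℝ)) →
        ‖pdL L (u ε) x‖ ≤ ε ^ (-(N : ℝ))) := by
  constructor
  · -- hard direction
    intro h1 m hm
    have hmR : (1:ℝ) ≤ (m:ℝ) := by exact_mod_cast hm
    have hmpos : (0:ℝ) < 1 / (m:ℝ) := by positivity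
    by_contra hcon
    push_neg at hcon
    choose L hL using hcon
    have H : ∀ (j : ℕ) (c : ℝ), 0 < c → ∃ ε : ℝ, ∃ z : Eu d,
        0 < ε ∧ ε ≤ c ∧ (‖z - x₀ ε‖ ≤ ε ^ (1 / (m : ℝ)) ∧
          ε ^ (-(((Nat.unpair j).1 : ℕ) : ℝ)) <
            ‖pdL (L (Nat.unpair j).1) (u ε) z‖) := by
      intro j c hc
      have h := hL (Nat.unpair j).1
      rw [SmallE] at h
      push_neg at h
      obtain ⟨ε, hε1, hε2, z, hz1, hz2⟩ := h c hc
      exact ⟨ε, z, hε1, hε2, hz1, hz2⟩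
    obtain ⟨e, y, hepos, hehalf, he0, hgood⟩ := exists_seq_aux _ H
    have hedec : StrictAnti e :=
      strictAnti_nat_of_succ_lt fun j => lt_of_le_of_lt (hehalf j) (half_lt_self (hepos j))
    have hebound : ∀ j, e j ≤ (1/2 : ℝ) ^ j := by
      intro j
      induction j with
      | zero => simpa using he0
      | succ j ih =>
        calc e (j+1) ≤ e j / 2 := hehalf j
          _ ≤ (1/2:ℝ)^j / 2 := by linarith
          _ = (1/2:ℝ)^(j+1) := by ring
    have he1 : ∀ j, e j ≤ 1 := fun j =>
      (hebound j).trans (pow_le_one₀ (by norm_num) (by norm_num))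
    classical
    set x : ℝ → Eu d := fun ε => if h : ∃ j, e j = ε then y h.choose else x₀ ε with hxdef
    have hxe : ∀ j, x (e j) = y j := by
      intro j
      have h : ∃ j', e j' = e j := ⟨j, rfl⟩
      have hx : x (e j) = y h.choose := dif_pos h
      rw [hx, hedec.injective h.choose_spec]
    have hxnear : ∀ ε : ℝ, 0 < ε → ε ≤ 1 → ‖x ε - x₀ ε‖ ≤ ε ^ (1 / (m:ℝ)) := by
      intro ε hε hε1
      by_cases h : ∃ j, e j = ε
      · obtain ⟨j', rfl⟩ := h
        rw [hxe j']
        exact (hgood j').1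
      · have hx : x ε = x₀ ε := dif_neg h
        rw [hx]
        simpa using Real.rpow_nonneg hε.le _
    obtain ⟨C, hC⟩ := hK.isBounded.exists_norm_le
    have hxmod : ModNet x := by
      refine ⟨1, min 1 (1/(max C 0 + 2)), by positivity, fun ε hε hεle => ?_⟩
      have hε1 : ε ≤ 1 := hεle.trans (min_le_left _ _)
      have hε2 : ε ≤ 1/(max C 0 + 2) := hεle.trans (min_le_right _ _)
      have hx0 : ‖x₀ ε‖ ≤ max C 0 := le_trans (hC _ (hx₀ ε hε hε1)) (le_max_left _ _)
      have hnear : ‖x ε - x₀ ε‖ ≤ 1 := by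
        refine (hxnear ε hε hε1).trans ?_
        exact Real.rpow_le_one hε.le hε1 hmpos.le
      have hxb : ‖x ε‖ ≤ max C 0 + 1 := by
        calc ‖x ε‖ = ‖x₀ ε + (x ε - x₀ ε)‖ := by congr 1; abel
          _ ≤ ‖x₀ ε‖ + ‖x ε - x₀ ε‖ := norm_add_le _ _
          _ ≤ max C 0 + 1 := by linarith
      have hinv : max C 0 + 2 ≤ ε⁻¹ :=
        (le_inv_comm₀ (by positivity) hε).mpr (by rw [inv_eq_one_div]; exact hε2)
      have hεpow : ε ^ (-((1:ℕ):ℝ)) = ε⁻¹ := by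
        rw [show -((1:ℕ):ℝ) = -1 by norm_num, Real.rpow_neg_one]
      show ‖x ε‖ ≤ ε ^ (-((1:ℕ):ℝ))
      rw [hεpow]
      linarith
    have hxfast : FastInf (fun ε => x ε - x₀ ε) :=
      ⟨1/(m:ℝ), hmpos, 1, one_pos, fun ε hε hε1 => hxnear ε hε hε1⟩
    obtain ⟨N₀, hN₀⟩ := h1 x hxmod hxfast
    obtain ⟨n', hn'neg, ε₀, hε₀, hbd⟩ := hN₀ (L (N₀+1))
    obtain ⟨ε₁, hε₁, hneg1⟩ := hn'neg 1
    have hδ : (0:ℝ) < min ε₀ (min ε₁ (1/2)) := by positivity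
    obtain ⟨k, hk⟩ := exists_pow_lt_of_lt_one hδ (by norm_num : (1/2:ℝ) < 1)
    set j := Nat.pair (N₀+1) k with hj
    have hje : e j ≤ min ε₀ (min ε₁ (1/2)) := by
      refine (hebound j).trans (le_trans ?_ hk.le)
      exact pow_le_pow_of_le_one (by norm_num) (by norm_num) (Nat.right_le_pair _ _)
    have hεpos : 0 < e j := hepos j
    have hεhalf : e j ≤ 1/2 := hje.trans ((min_le_right _ _).trans (min_le_right _ _))
    have hε1 : e j ≤ 1 := hεhalf.trans (by norm_num)
    have hgj := (hgood j).2
    have hup : (Nat.unpair j).1 = N₀ + 1 := by rw [hj, Nat.unpair_pair]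
    rw [hup] at hgj
    have hb : ‖pdL (L (N₀+1)) (u (e j)) (x (e j))‖ ≤ (e j) ^ (-(N₀:ℝ)) + n' (e j) :=
      hbd (e j) hεpos (hje.trans (min_le_left _ _))
    rw [hxe j] at hb
    have hn : n' (e j) ≤ e j := by
      have := hneg1 (e j) hεpos (hje.trans ((min_le_right _ _).trans (min_le_left _ _)))
      calc n' (e j) ≤ ‖n' (e j)‖ := le_abs_self _
        _ ≤ (e j) ^ ((1:ℕ):ℝ) := this
        _ = e j := by norm_num
    have hkey : (e j) ^ (-((N₀+1 : ℕ) : ℝ)) = (e j) ^ (-(N₀:ℝ)) * (e j)⁻¹ := by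
      rw [← Real.rpow_neg_one (e j), ← Real.rpow_add hεpos]
      push_cast
      ring_nf
    have hone : (1:ℝ) ≤ (e j) ^ (-(N₀:ℝ)) :=
      Real.one_le_rpow_of_pos_of_le_one_of_nonpos hεpos hε1 (neg_nonpos.mpr (Nat.cast_nonneg _))
    have hinv2 : (2:ℝ) ≤ (e j)⁻¹ := by
      rw [le_inv_comm₀ (by norm_num) hεpos]
      linarith
    have hcontra : (e j) ^ (-((N₀+1 : ℕ) : ℝ)) < (e j) ^ (-(N₀:ℝ)) + e j := by
      calc (e j) ^ (-((N₀+1 : ℕ) : ℝ)) < ‖pdL (L (N₀+1)) (u (e j)) (y j)‖ := hgj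
        _ ≤ (e j) ^ (-(N₀:ℝ)) + n' (e j) := hb
        _ ≤ (e j) ^ (-(N₀:ℝ)) + e j := by linarith
    rw [hkey] at hcontra
    nlinarith [hcontra, hone, hinv2, hεhalf, hεpos]
  · -- easy direction
    intro h2 x hxmod hxfast
    obtain ⟨a, ha, εa, hεa, hfa⟩ := hxfast
    obtain ⟨m, hm1, hma⟩ : ∃ m : ℕ, 1 ≤ m ∧ 1/(m:ℝ) ≤ a := by
      refine ⟨max 1 ⌈1/a⌉₊, le_max_left _ _, ?_⟩
      have hmp : (0:ℝ) < (max 1 ⌈1/a⌉₊ : ℕ) := by positivity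
      rw [div_le_iff₀ hmp]
      have h' : 1/a ≤ ((max 1 ⌈1/a⌉₊ : ℕ) : ℝ) :=
        le_trans (Nat.le_ceil _) (by exact_mod_cast Nat.cast_le.mpr (le_max_right _ _))
      calc (1:ℝ) = a * (1/a) := by field_simp
        _ ≤ a * ((max 1 ⌈1/a⌉₊ : ℕ) : ℝ) := by
            exact mul_le_mul_of_nonneg_left h' ha.le
    obtain ⟨N, hN⟩ := h2 m hm1
    refine ⟨N, fun L => ⟨fun _ => 0, fun k => ⟨1, one_pos, fun ε hε _ => by
      simpa using Real.rpow_nonneg hε.le (k:ℝ)⟩, ?_⟩⟩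
    obtain ⟨ε₂, hε₂, hb⟩ := hN L
    refine ⟨min 1 (min εa ε₂), by positivity, fun ε hε hεle => ?_⟩
    have hε1 : ε ≤ 1 := hεle.trans (min_le_left _ _)
    have hεa' : ε ≤ εa := hεle.trans ((min_le_right _ _).trans (min_le_left _ _))
    have hε2' : ε ≤ ε₂ := hεle.trans ((min_le_right _ _).trans (min_le_right _ _))
    have hnear : ‖x ε - x₀ ε‖ ≤ ε ^ (1/(m:ℝ)) :=
      le_trans (hfa ε hε hεa') (Real.rpow_le_rpow_of_exponent_ge hε hε1 hma)
    have := hb ε hε hε2' (x ε) hnear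
    simpa using this
end
end
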